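/- arXiv:1111.5928 — 8 statements merged into one kernel-verified Lean document; each statement's English description precedes it below -/
import Mathlib

section
/- Let R, Q be real numbers with 0 < R and 5R < Q. For parameters α, β > 0 define ξ_{α,β} : [0,Q] → ℝ by ξ_{α,β}(t) = exp((1 − t/(2R))²) for t ∈ [0,R] and ξ_{α,β}(t) = β(e^{−αt} − e^{−αQ}) for t ∈ [R,Q]. Then there exists a unique choice of parameters α = α(R,Q) > 0 and β = β(R,Q) > 0 such that the two formulas agree at t = R together with their first derivatives (so that ξ_{α,β} is C¹ on [0,Q], and is then admissible on [0,Q]: it is nonnegative, nonincreasing, and convex on each of the subintervals [0,R] and [R,Q]). Moreover, this unique choice satisfies 1 ≤ 4R·α(R,Q) ≤ 2 and 1 ≤ β(R,Q) ≤ 10. -/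
open Real Set

lemma derivL_aux (R : ℝ) (hR : 0 < R) :
    deriv (fun t => Real.exp ((1 - t / (2 * R)) ^ 2)) R
      = -(Real.exp ((1:ℝ)/4) / (2 * R)) := by
  have h2R : (2 * R) ≠ 0 := by positivity
  have h1 : HasDerivAt (fun t : ℝ => 1 - t / (2 * R)) (-(1 / (2 * R))) R := by
    simpa using ((hasDerivAt_id R).div_const (2 * R)).const_sub 1
  have h3 : HasDerivAt (fun t => Real.exp ((1 - t / (2 * R)) ^ 2)) _ R := (h1.pow 2).exp
  rw [h3.deriv]
  simp only [Pi.pow_apply]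
  have hhalf : R / (2 * R) = 1 / 2 := by
    rw [div_eq_div_iff h2R two_ne_zero]; ring
  rw [hhalf]
  norm_num
  ring

lemma derivR_aux (α β Q R : ℝ) :
    deriv (fun t => β * (Real.exp (-α * t) - Real.exp (-α * Q))) R
      = β * (Real.exp (-α * R) * (-α)) := by
  have h1 : HasDerivAt (fun t : ℝ => -α * t) (-α) R := by
    simpa using (hasDerivAt_id R).const_mul (-α)
  exact ((h1.exp.sub_const (Real.exp (-α * Q))).const_mul β).deriv

lemma root_uniq_aux {R D a b : ℝ} (hD : 0 < D) (ha : 0 < a) (hab : a < b)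
    (fa : Real.exp (-(D * a)) = 1 - 2 * R * a)
    (fb : Real.exp (-(D * b)) = 1 - 2 * R * b) : False := by
  have hb : 0 < b := ha.trans hab
  have hq : 0 < a / b := div_pos ha hb
  have hp : 0 < 1 - a / b := by
    have : a / b < 1 := (div_lt_one hb).2 hab
    linarith
  have hxy : (0:ℝ) ≠ -(D * b) := by nlinarith
  have key := strictConvexOn_exp.2 (mem_univ (0:ℝ)) (mem_univ (-(D * b))) hxy hp hq (by ring)
  simp only [smul_eq_mul, mul_zero, Real.exp_zero, mul_one, zero_add] at key
  have hqb : a / b * b = a := div_mul_cancel₀ a hb.ne'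
  have harg : a / b * -(D * b) = -(D * a) := by
    field_simp
  rw [harg, fa, fb] at key
  have h2 : a / b * (2 * R * b) = 2 * R * a := by
    field_simp
  nlinarith [key]

set_option maxHeartbeats 1600000 in
/-- Lemma 2.4: for `0 < R` and `5R < Q`, there is a unique pair of positive
parameters `α, β` such that the two formulas
`t ↦ exp((1 - t/(2R))²)` (on `[0,R]`) and `t ↦ β(e^{-αt} - e^{-αQ})` (on `[R,Q]`)
agree at `t = R` together with their first derivatives; the resulting piecewise
function is then admissible (nonnegative, nonincreasing, convex on each piece),
and the parameters satisfy `1 ≤ 4Rα ≤ 2` and `1 ≤ β ≤ 10`. -/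
theorem stmt_0 (R Q : ℝ) (hR : 0 < R) (hQ : 5 * R < Q) :
    ∃ α β : ℝ, 0 < α ∧ 0 < β ∧
      (Real.exp ((1 - R / (2 * R)) ^ 2)
        = β * (Real.exp (-α * R) - Real.exp (-α * Q))) ∧
      (deriv (fun t => Real.exp ((1 - t / (2 * R)) ^ 2)) R
        = deriv (fun t => β * (Real.exp (-α * t) - Real.exp (-α * Q))) R) ∧
      (1 ≤ 4 * R * α ∧ 4 * R * α ≤ 2) ∧ (1 ≤ β ∧ β ≤ 10) ∧
      (∀ t ∈ Icc (0 : ℝ) Q,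
        0 ≤ (fun t => if t ≤ R then Real.exp ((1 - t / (2 * R)) ^ 2)
          else β * (Real.exp (-α * t) - Real.exp (-α * Q))) t) ∧
      AntitoneOn (fun t => if t ≤ R then Real.exp ((1 - t / (2 * R)) ^ 2)
          else β * (Real.exp (-α * t) - Real.exp (-α * Q))) (Icc 0 Q) ∧
      ConvexOn ℝ (Icc 0 R) (fun t => Real.exp ((1 - t / (2 * R)) ^ 2)) ∧
      ConvexOn ℝ (Icc R Q)
        (fun t => β * (Real.exp (-α * t) - Real.exp (-α * Q))) ∧
      (∀ α' β' : ℝ, 0 < α' → 0 < β' →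
        (Real.exp ((1 - R / (2 * R)) ^ 2)
          = β' * (Real.exp (-α' * R) - Real.exp (-α' * Q))) →
        (deriv (fun t => Real.exp ((1 - t / (2 * R)) ^ 2)) R
          = deriv (fun t => β' * (Real.exp (-α' * t) - Real.exp (-α' * Q))) R) →
        α' = α ∧ β' = β) := by
  have h2R : (0:ℝ) < 2 * R := by linarith
  have h2Rne : (2 * R) ≠ 0 := h2R.ne'
  have hhalf : R / (2 * R) = 1 / 2 := by
    rw [div_eq_div_iff h2Rne two_ne_zero]; ring
  have hquart : (1 - R / (2 * R)) ^ 2 = (1:ℝ)/4 := by rw [hhalf]; norm_num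
  obtain ⟨D, hDdef⟩ : ∃ D : ℝ, D = Q - R := ⟨_, rfl⟩
  have hD : 4 * R < D := by simp only [hDdef]; linarith
  have hDpos : 0 < D := by linarith
  -- the root function
  obtain ⟨f, hfdef⟩ : ∃ f : ℝ → ℝ, f = fun x => 2 * R * x + Real.exp (-(D * x)) - 1 := ⟨_, rfl⟩
  have hcont : ContinuousOn f (Icc (1/(4*R)) (1/(2*R))) := by
    apply Continuous.continuousOn
    simp only [hfdef]
    continuity
  have hle : 1/(4*R) ≤ 1/(2*R) := by
    apply div_le_div_of_nonneg_left (by norm_num) h2R (by linarith)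
  have hfa : f (1/(4*R)) < 0 := by
    have h1 : -(D * (1/(4*R))) < -1 := by
      have : 1 < D * (1/(4*R)) := by
        rw [mul_one_div, lt_div_iff₀ (by linarith : (0:ℝ) < 4*R)]
        linarith
      linarith
    have h2 : Real.exp (-(D * (1/(4*R)))) < Real.exp (-1) := Real.exp_lt_exp.2 h1
    have h3 : Real.exp (-1) < 1/2 := by
      rw [Real.exp_neg]
      rw [inv_lt_comm₀ (Real.exp_pos 1) (by norm_num)]
      norm_num
      linarith [Real.exp_one_gt_d9]
    have h4 : 2 * R * (1/(4*R)) = 1/2 := by field_simp; ring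
    simp only [hfdef]
    rw [h4]
    linarith
  have hfb : 0 ≤ f (1/(2*R)) := by
    have h4 : 2 * R * (1/(2*R)) = 1 := by field_simp
    simp only [hfdef]
    rw [h4]
    have := Real.exp_pos (-(D * (1/(2*R))))
    linarith
  obtain ⟨α, hαmem, hfα⟩ := intermediate_value_Icc hle hcont ⟨hfa.le, hfb⟩
  obtain ⟨hα1, hα2⟩ := hαmem
  have hαpos : 0 < α := lt_of_lt_of_le (by positivity) hα1
  have hb1 : 1 ≤ 4 * R * α := by
    rw [div_le_iff₀ (by linarith : (0:ℝ) < 4*R)] at hα1; linarith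
  have hb2 : 4 * R * α ≤ 2 := by
    rw [le_div_iff₀ h2R] at hα2; linarith
  -- the key identity
  have key : Real.exp (-(D * α)) = 1 - 2 * R * α := by
    simp only [hfdef] at hfα; linarith
  have h2Rαpos : 0 < 2 * R * α := by positivity
  have h2Rα1 : 2 * R * α ≤ 1 := by linarith
  obtain ⟨β, hβdef⟩ : ∃ β : ℝ, β = Real.exp ((1:ℝ)/4) * Real.exp (α * R) / (2 * R * α) := ⟨_, rfl⟩
  have hβpos : 0 < β := by rw [hβdef]; positivity
  -- exp(-αQ) in terms of exp(-αR)
  have hsplit : ∀ a : ℝ, Real.exp (-a * Q) = Real.exp (-a * R) * Real.exp (-(D * a)) := by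
    intro a
    rw [← Real.exp_add]
    congr 1
    simp only [hDdef]; ring
  have hRR : Real.exp (α * R) * Real.exp (-(α * R)) = 1 := by
    rw [← Real.exp_add]; norm_num
  -- the matching of values (in exp(1/4) form)
  have eq1 : Real.exp ((1:ℝ)/4) = β * (Real.exp (-α * R) - Real.exp (-α * Q)) := by
    rw [hsplit α, key, hβdef]
    field_simp
    linear_combination (-(2 * R * α)) * hRR
  -- the matching of derivatives
  have eqA : β * (α * Real.exp (-α * R)) = Real.exp ((1:ℝ)/4) / (2 * R) := by
    rw [hβdef]
    field_simp
    linear_combination hRR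
  have eq2 : deriv (fun t => Real.exp ((1 - t / (2 * R)) ^ 2)) R
      = deriv (fun t => β * (Real.exp (-α * t) - Real.exp (-α * Q))) R := by
    rw [derivL_aux R hR, derivR_aux α β Q R]
    have : β * (Real.exp (-α * R) * -α) = -(β * (α * Real.exp (-α * R))) := by ring
    rw [this, eqA]
  -- β bounds
  have hαR1 : 1/4 ≤ α * R := by linarith
  have hαR2 : α * R ≤ 1/2 := by linarith
  have hβlb : 1 ≤ β := by
    rw [hβdef, le_div_iff₀ h2Rαpos, one_mul]
    have e1 : 1 ≤ Real.exp ((1:ℝ)/4) := Real.one_le_exp (by norm_num)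
    have e2 : 1 ≤ Real.exp (α * R) := Real.one_le_exp (by linarith)
    nlinarith
  have hβub : β ≤ 10 := by
    rw [hβdef, div_le_iff₀ h2Rαpos]
    have e1 : Real.exp ((1:ℝ)/4) * Real.exp (α * R) ≤ Real.exp 1 := by
      rw [← Real.exp_add]
      exact Real.exp_le_exp.2 (by linarith)
    have e2 : Real.exp 1 < 2.7182818286 := Real.exp_one_lt_d9
    nlinarith
  -- monotonicity of the left piece
  have monoL : ∀ x y : ℝ, x ≤ y → y ≤ R →
      Real.exp ((1 - y / (2 * R)) ^ 2) ≤ Real.exp ((1 - x / (2 * R)) ^ 2) := by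
    intro x y hxy hyR
    apply Real.exp_le_exp.2
    have hy1 : y / (2 * R) ≤ 1 := by
      rw [div_le_one h2R]; linarith
    have hnn : 0 ≤ 1 - y / (2 * R) := by linarith
    have hmono : 1 - y / (2 * R) ≤ 1 - x / (2 * R) :=
      sub_le_sub_left ((div_le_div_iff_of_pos_right h2R).2 hxy) 1
    exact pow_le_pow_left₀ hnn hmono 2
  -- monotonicity of the right piece
  have monoR : ∀ x y : ℝ, x ≤ y →
      β * (Real.exp (-α * y) - Real.exp (-α * Q))
        ≤ β * (Real.exp (-α * x) - Real.exp (-α * Q)) := by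
    intro x y hxy
    apply mul_le_mul_of_nonneg_left _ hβpos.le
    apply sub_le_sub_right
    apply Real.exp_le_exp.2
    have := mul_le_mul_of_nonneg_left hxy hαpos.le
    linarith
  refine ⟨α, β, hαpos, hβpos, by rw [hquart]; exact eq1, eq2, ⟨hb1, hb2⟩, ⟨hβlb, hβub⟩,
    ?_, ?_, ?_, ?_, ?_⟩
  · -- nonnegativity
    intro t ht
    by_cases htR : t ≤ R
    · simp only [htR, if_pos]
      positivity
    · simp only [htR, if_neg, not_false_iff]
      apply mul_nonneg hβpos.le
      have : Real.exp (-α * Q) ≤ Real.exp (-α * t) := by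
        apply Real.exp_le_exp.2
        nlinarith [ht.2]
      linarith
  · -- antitone
    intro x hx y hy hxy
    by_cases hxR : x ≤ R
    · by_cases hyR : y ≤ R
      · simp only [hxR, hyR, if_pos]
        exact monoL x y hxy hyR
      · simp only [hxR, hyR, if_pos, if_neg, not_false_iff]
        calc β * (Real.exp (-α * y) - Real.exp (-α * Q))
            ≤ β * (Real.exp (-α * R) - Real.exp (-α * Q)) := monoR R y (by linarith [not_le.1 hyR])
          _ = Real.exp ((1:ℝ)/4) := eq1.symm
          _ = Real.exp ((1 - R / (2 * R)) ^ 2) := by rw [hquart]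
          _ ≤ Real.exp ((1 - x / (2 * R)) ^ 2) := monoL x R hxR le_rfl
    · have hyR : ¬ y ≤ R := fun h => hxR (hxy.trans h)
      simp only [hxR, hyR, if_neg, not_false_iff]
      exact monoR x y hxy
  · -- convexity left
    refine ⟨convex_Icc _ _, fun x _ y _ a b ha hb hab => ?_⟩
    simp only [smul_eq_mul]
    have hd : (a * x + b * y) / (2 * R) = a * (x / (2 * R)) + b * (y / (2 * R)) := by
      field_simp
    have hq : (1 - (a * x + b * y) / (2 * R)) ^ 2
        ≤ a * (1 - x / (2 * R)) ^ 2 + b * (1 - y / (2 * R)) ^ 2 := by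
      rw [hd]
      have hb' : b = 1 - a := by linarith
      subst hb'
      nlinarith [mul_nonneg (mul_nonneg ha hb) (sq_nonneg (x / (2 * R) - y / (2 * R)))]
    calc Real.exp ((1 - (a * x + b * y) / (2 * R)) ^ 2)
        ≤ Real.exp (a * (1 - x / (2 * R)) ^ 2 + b * (1 - y / (2 * R)) ^ 2) :=
          Real.exp_le_exp.2 hq
      _ ≤ a * Real.exp ((1 - x / (2 * R)) ^ 2) + b * Real.exp ((1 - y / (2 * R)) ^ 2) := by
          have := convexOn_exp.2 (mem_univ ((1 - x / (2 * R)) ^ 2))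
            (mem_univ ((1 - y / (2 * R)) ^ 2)) ha hb hab
          simpa [smul_eq_mul] using this
  · -- convexity right
    refine ⟨convex_Icc _ _, fun x _ y _ a b ha hb hab => ?_⟩
    simp only [smul_eq_mul]
    have he : Real.exp (-α * (a * x + b * y)) ≤ a * Real.exp (-α * x) + b * Real.exp (-α * y) := by
      have harg : -α * (a * x + b * y) = a * (-α * x) + b * (-α * y) := by ring
      rw [harg]
      have := convexOn_exp.2 (mem_univ (-α * x)) (mem_univ (-α * y)) ha hb hab
      simpa [smul_eq_mul] using this
    have hge := mul_le_mul_of_nonneg_left he hβpos.le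
    calc β * (Real.exp (-α * (a * x + b * y)) - Real.exp (-α * Q))
        = β * Real.exp (-α * (a * x + b * y)) - β * Real.exp (-α * Q) := by ring
      _ ≤ β * (a * Real.exp (-α * x) + b * Real.exp (-α * y)) - β * Real.exp (-α * Q) := by
          linarith
      _ = a * (β * (Real.exp (-α * x) - Real.exp (-α * Q)))
            + b * (β * (Real.exp (-α * y) - Real.exp (-α * Q))) := by
          linear_combination (β * Real.exp (-α * Q)) * hab
  · -- uniqueness
    intro α' β' hα' hβ' e1' e2'
    rw [hquart] at e1'
    rw [derivL_aux R hR, derivR_aux α' β' Q R] at e2'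
    have eA' : β' * (α' * Real.exp (-α' * R)) = Real.exp ((1:ℝ)/4) / (2 * R) := by
      linear_combination e2'
    have eA'' : 2 * R * (β' * (α' * Real.exp (-α' * R))) = Real.exp ((1:ℝ)/4) := by
      rw [eA']; field_simp
    have key' : Real.exp (-(D * α')) = 1 - 2 * R * α' := by
      have hs := hsplit α'
      have hexpR := Real.exp_pos (-α' * R)
      rw [hs] at e1'
      have : β' * Real.exp (-α' * R) * Real.exp (-(D * α')) =
          β' * Real.exp (-α' * R) * (1 - 2 * R * α') := by
        linear_combination e1' + eA''
      have hβe : 0 < β' * Real.exp (-α' * R) := by positivity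
      exact mul_left_cancel₀ hβe.ne' this
    have hαα : α' = α := by
      rcases lt_trichotomy α' α with h | h | h
      · exact absurd (root_uniq_aux hDpos hα' h key' key) id
      · exact h
      · exact absurd (root_uniq_aux hDpos hαpos h key key') id
    refine ⟨hαα, ?_⟩
    rw [hαα] at eA'
    have : β' * (α * Real.exp (-α * R)) = β * (α * Real.exp (-α * R)) := by
      rw [eA', eqA]
    have hpos : 0 < α * Real.exp (-α * R) := by positivity
    exact mul_right_cancel₀ hpos.ne' this
end

section
/- Let a ∈ (0, 1/4) and set α = 2a/(1−4a) and β = a/(1−4a). For parameters δ, ε > 0 and 0 < R < Q define ξ_{δ,ε} : [0,Q] → ℝ by ξ_{δ,ε}(t) = (1 + t/R)^{−β} for t ∈ [0,R] and ξ_{δ,ε}(t) = δ((1 + εt)^{−α} − (1 + εQ)^{−α}) for t ∈ [R,Q]. Then there exists a constant C(α,β) > 1, depending only on α and β, such that for all 0 < R and Q > C(α,β)·R there is a unique choice of parameters δ = δ(R,Q) > 0 and ε = ε(R,Q) > 0 for which the two formulas agree at t = R together with their first derivatives (so that ξ_{δ,ε} is C¹ on [0,Q], and is then admissible on [0,Q]: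 nonnegative, nonincreasing, and convex on each of [0,R] and [R,Q]). Moreover, there exist positive constants c₁, c₂ depending only on α and β (not on R and Q) such that 1 ≤ 6R·ε(R,Q) ≤ 2 and c₁ ≤ δ(R,Q) ≤ c₂. -/
open Real Set

lemma rpow_neg_convexOn {p : ℝ} (hp : p ≤ 0) :
    ConvexOn ℝ (Ioi (0:ℝ)) fun x : ℝ => x ^ p := by
  have hderiv : ∀ x : ℝ, x ∈ Ioi (0:ℝ) →
      HasDerivAt (fun x : ℝ => x ^ p) (p * x ^ (p - 1)) x := fun x hx =>
    Real.hasDerivAt_rpow_const (Or.inl (ne_of_gt hx))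
  have hev : ∀ x : ℝ, x ∈ Ioi (0:ℝ) →
      deriv (fun x : ℝ => x ^ p) =ᶠ[nhds x] fun y => p * y ^ (p - 1) := by
    intro x hx
    filter_upwards [Ioi_mem_nhds hx] with y hy
    exact (hderiv y hy).deriv
  have hg : ∀ x : ℝ, x ∈ Ioi (0:ℝ) →
      HasDerivAt (fun y : ℝ => p * y ^ (p - 1)) (p * ((p - 1) * x ^ (p - 2))) x := by
    intro x hx
    have := (Real.hasDerivAt_rpow_const (x := x) (p := p - 1) (Or.inl (ne_of_gt hx))).const_mul p
    exact this.congr_deriv (by ring_nf)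
  apply convexOn_of_deriv2_nonneg (convex_Ioi 0)
  · exact fun x hx => ((hderiv x hx).continuousAt).continuousWithinAt
  · rw [interior_Ioi]
    exact fun x hx => (hderiv x hx).differentiableAt.differentiableWithinAt
  · rw [interior_Ioi]
    intro x hx
    exact (((hg x hx).differentiableAt.congr_of_eventuallyEq (hev x hx))).differentiableWithinAt
  · rw [interior_Ioi]
    intro x hx
    have h2 : deriv^[2] (fun x : ℝ => x ^ p) x = p * ((p - 1) * x ^ (p - 2)) := by
      rw [Function.iterate_succ_apply, Function.iterate_one, (hev x hx).deriv_eq, (hg x hx).deriv]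
    rw [h2]
    have hxp : (0:ℝ) ≤ x ^ (p - 2) := Real.rpow_nonneg (le_of_lt hx) _
    have hpp : 0 ≤ p * (p - 1) := by nlinarith
    nlinarith [mul_nonneg hpp hxp]

set_option maxHeartbeats 1600000 in
/-- Lemma 2.5: for `a ∈ (0,1/4)`, `α = 2a/(1-4a)`, `β = a/(1-4a)`, there is a
constant `C(α,β) > 1` such that for all `0 < R` and `Q > C·R` there is a unique
pair of positive parameters `δ, ε` for which the two formulas
`t ↦ (1 + t/R)^{-β}` (on `[0,R]`) and `t ↦ δ((1+εt)^{-α} - (1+εQ)^{-α})`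
(on `[R,Q]`) agree at `t = R` together with their first derivatives; the
resulting piecewise function is then admissible, and `1 ≤ 6Rε ≤ 2`,
`c₁ ≤ δ ≤ c₂` with positive constants `c₁, c₂` independent of `R, Q`. -/
theorem stmt_1 (a α β : ℝ) (ha : a ∈ Set.Ioo (0 : ℝ) (1 / 4))
    (hα : α = 2 * a / (1 - 4 * a)) (hβ : β = a / (1 - 4 * a)) :
    ∃ C c₁ c₂ : ℝ, 1 < C ∧ 0 < c₁ ∧ 0 < c₂ ∧
      ∀ R Q : ℝ, 0 < R → C * R < Q →
        ∃ δ ε : ℝ, 0 < δ ∧ 0 < ε ∧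
          ((1 + R / R) ^ (-β)
            = δ * ((1 + ε * R) ^ (-α) - (1 + ε * Q) ^ (-α))) ∧
          (deriv (fun t : ℝ => (1 + t / R) ^ (-β)) R
            = deriv (fun t : ℝ =>
                δ * ((1 + ε * t) ^ (-α) - (1 + ε * Q) ^ (-α))) R) ∧
          (1 ≤ 6 * R * ε ∧ 6 * R * ε ≤ 2) ∧ (c₁ ≤ δ ∧ δ ≤ c₂) ∧
          (∀ t ∈ Icc (0 : ℝ) Q,
            0 ≤ (fun t : ℝ => if t ≤ R then (1 + t / R) ^ (-β)
              else δ * ((1 + ε * t) ^ (-α) - (1 + ε * Q) ^ (-α))) t) ∧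
          AntitoneOn (fun t : ℝ => if t ≤ R then (1 + t / R) ^ (-β)
              else δ * ((1 + ε * t) ^ (-α) - (1 + ε * Q) ^ (-α))) (Icc 0 Q) ∧
          ConvexOn ℝ (Icc 0 R) (fun t : ℝ => (1 + t / R) ^ (-β)) ∧
          ConvexOn ℝ (Icc R Q)
            (fun t : ℝ => δ * ((1 + ε * t) ^ (-α) - (1 + ε * Q) ^ (-α))) ∧
          (∀ δ' ε' : ℝ, 0 < δ' → 0 < ε' →
            ((1 + R / R) ^ (-β)
              = δ' * ((1 + ε' * R) ^ (-α) - (1 + ε' * Q) ^ (-α))) →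
            (deriv (fun t : ℝ => (1 + t / R) ^ (-β)) R
              = deriv (fun t : ℝ =>
                  δ' * ((1 + ε' * t) ^ (-α) - (1 + ε' * Q) ^ (-α))) R) →
            δ' = δ ∧ ε' = ε) := by
  obtain ⟨ha0, ha4⟩ := ha
  have h4a : 0 < 1 - 4 * a := by linarith
  have hβ0 : 0 < β := by rw [hβ]; positivity
  have hαβ : α = 2 * β := by rw [hα, hβ]; ring
  have hα0 : 0 < α := by rw [hαβ]; linarith
  set K : ℝ := Real.log 2 + (α + 1) * Real.log (7/6) with hK
  have hK0 : 0 < K := by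
    have h1 : (0:ℝ) < Real.log 2 := Real.log_pos (by norm_num)
    have h2 : (0:ℝ) < Real.log (7/6) := Real.log_pos (by norm_num)
    rw [hK]
    linarith [mul_pos (show (0:ℝ) < α + 1 by linarith) h2, h1]
  refine ⟨max (6 * (Real.exp (K / α) - 1)) 3, (3/4) * 2 ^ (-β),
    (3/2) * 2 ^ (-β) * (4/3) ^ (α + 1), ?_, by positivity, by positivity, ?_⟩
  · exact lt_of_lt_of_le (by norm_num) (le_max_right _ _)
  intro R Q hR hQ
  have hQ3 : 3 * R < Q := by
    have h := mul_le_mul_of_nonneg_right (le_max_right (6 * (Real.exp (K / α) - 1)) 3) hR.le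
    linarith
  have hQ0 : 0 < Q := by linarith
  have h3R : (0:ℝ) < 3 * R := by linarith
  have h6R : (0:ℝ) < 6 * R := by linarith
  have hC₀ : Real.exp (K / α) ≤ 1 + (6 * R)⁻¹ * Q := by
    have h := mul_le_mul_of_nonneg_right (le_max_left (6 * (Real.exp (K / α) - 1)) 3) hR.le
    have h2 : 6 * (Real.exp (K / α) - 1) * R < Q := by linarith
    have h3 : Real.exp (K / α) - 1 ≤ (6 * R)⁻¹ * Q := by
      rw [show (6 * R)⁻¹ * Q = Q / (6 * R) by ring, le_div_iff₀ h6R]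
      linarith
    linarith
  set H : ℝ → ℝ := fun e =>
    -(α * Real.log (1 + e * Q)) - Real.log (1 - 3 * (e * R))
      + (α + 1) * Real.log (1 + e * R) with hHdef
  set H' : ℝ → ℝ := fun e =>
    -(α * Q) * (1 + e * Q)⁻¹ + (3 * R) * (1 - 3 * (e * R))⁻¹
      + ((α + 1) * R) * (1 + e * R)⁻¹ with hH'def
  set H'' : ℝ → ℝ := fun e =>
    α * Q ^ 2 * ((1 + e * Q) ^ 2)⁻¹ + 9 * R ^ 2 * ((1 - 3 * (e * R)) ^ 2)⁻¹
      - (α + 1) * R ^ 2 * ((1 + e * R) ^ 2)⁻¹ with hH''def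
  have hpos : ∀ e : ℝ, 0 ≤ e → e < (3 * R)⁻¹ →
      0 < 1 + e * Q ∧ 0 < 1 - 3 * (e * R) ∧ 0 < 1 + e * R := by
    intro e he1 he2
    have h1 : e * (3 * R) < 1 := by
      have := mul_lt_mul_of_pos_right he2 h3R
      rwa [inv_mul_cancel₀ h3R.ne'] at this
    have hq := mul_nonneg he1 hQ0.le
    have hr := mul_nonneg he1 hR.le
    refine ⟨by linarith, by linarith, by linarith⟩
  have hdH : ∀ e : ℝ, 0 < 1 + e * Q → 0 < 1 - 3 * (e * R) → 0 < 1 + e * R →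
      HasDerivAt H (H' e) e := by
    intro e h1 h2 h3
    have d1 : HasDerivAt (fun x : ℝ => 1 + x * Q) Q e := by
      simpa using ((hasDerivAt_id e).mul_const Q).const_add 1
    have d2 : HasDerivAt (fun x : ℝ => 1 - 3 * (x * R)) (-(3 * R)) e := by
      simpa using (((hasDerivAt_id e).mul_const R).const_mul 3).const_sub 1
    have d3 : HasDerivAt (fun x : ℝ => 1 + x * R) R e := by
      simpa using ((hasDerivAt_id e).mul_const R).const_add 1
    have l1 := d1.log h1.ne'
    have l2 := d2.log h2.ne'
    have l3 := d3.log h3.ne'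
    have hcomb := ((l1.const_mul α).neg.sub l2).add (l3.const_mul (α + 1))
    refine hcomb.congr_deriv ?_
    rw [hH'def]
    rw [div_eq_mul_inv, div_eq_mul_inv, div_eq_mul_inv]
    ring
  have hdH' : ∀ e : ℝ, 0 < 1 + e * Q → 0 < 1 - 3 * (e * R) → 0 < 1 + e * R →
      HasDerivAt H' (H'' e) e := by
    intro e h1 h2 h3
    have d1 : HasDerivAt (fun x : ℝ => 1 + x * Q) Q e := by
      simpa using ((hasDerivAt_id e).mul_const Q).const_add 1
    have d2 : HasDerivAt (fun x : ℝ => 1 - 3 * (x * R)) (-(3 * R)) e := by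
      simpa using (((hasDerivAt_id e).mul_const R).const_mul 3).const_sub 1
    have d3 : HasDerivAt (fun x : ℝ => 1 + x * R) R e := by
      simpa using ((hasDerivAt_id e).mul_const R).const_add 1
    have i1 := d1.inv h1.ne'
    have i2 := d2.inv h2.ne'
    have i3 := d3.inv h3.ne'
    have hcomb := ((i1.const_mul (-(α * Q))).add (i2.const_mul (3 * R))).add
      (i3.const_mul ((α + 1) * R))
    refine hcomb.congr_deriv ?_
    rw [hH''def]
    rw [div_eq_mul_inv, div_eq_mul_inv, div_eq_mul_inv]
    ring
  have hHc : ContinuousOn H (Ico 0 ((3 * R)⁻¹)) := by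
    intro e he
    obtain ⟨h1, h2, h3⟩ := hpos e he.1 he.2
    exact (hdH e h1 h2 h3).continuousAt.continuousWithinAt
  have hconv : StrictConvexOn ℝ (Ico 0 ((3 * R)⁻¹)) H := by
    apply strictConvexOn_of_deriv2_pos (convex_Ico _ _) hHc
    rw [interior_Ico]
    intro x hx
    obtain ⟨h1, h2, h3⟩ := hpos x hx.1.le hx.2
    have hev : deriv H =ᶠ[nhds x] H' := by
      filter_upwards [Ioo_mem_nhds hx.1 hx.2] with y hy
      obtain ⟨g1, g2, g3⟩ := hpos y hy.1.le hy.2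
      exact (hdH y g1 g2 g3).deriv
    have h2d : deriv^[2] H x = H'' x := by
      rw [Function.iterate_succ_apply, Function.iterate_one, hev.deriv_eq, (hdH' x h1 h2 h3).deriv]
    rw [h2d]
    simp only [hH''def]
    -- positivity of H''
    have hb1 : 1 + x * Q < 2 * (Q * (3 * R)⁻¹) := by
      have hx1 : x * Q < (3 * R)⁻¹ * Q := mul_lt_mul_of_pos_right hx.2 hQ0
      have hx2 : (1:ℝ) < Q * (3 * R)⁻¹ := by
        rw [show Q * (3 * R)⁻¹ = Q / (3 * R) by ring, lt_div_iff₀ h3R]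
        linarith
      linarith
    have ht1 : (9/4) * (α * R ^ 2) < α * Q ^ 2 * ((1 + x * Q) ^ 2)⁻¹ := by
      have hA : (0:ℝ) < 1 + x * Q := h1
      have hB : (0:ℝ) < 2 * (Q * (3 * R)⁻¹) := by positivity
      have hsq : (1 + x * Q) ^ 2 < (2 * (Q * (3 * R)⁻¹)) ^ 2 := by
        have hprod := mul_self_lt_mul_self h1.le hb1
        simp only [pow_two]
        linarith [hprod]
      have hinv : ((2 * (Q * (3 * R)⁻¹)) ^ 2)⁻¹ < ((1 + x * Q) ^ 2)⁻¹ := by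
        apply inv_strictAnti₀ (by positivity) hsq
      have hval : α * Q ^ 2 * ((2 * (Q * (3 * R)⁻¹)) ^ 2)⁻¹ = (9/4) * (α * R ^ 2) := by
        field_simp
        ring
      calc (9/4) * (α * R ^ 2) = α * Q ^ 2 * ((2 * (Q * (3 * R)⁻¹)) ^ 2)⁻¹ := hval.symm
        _ < α * Q ^ 2 * ((1 + x * Q) ^ 2)⁻¹ := by
            apply mul_lt_mul_of_pos_left hinv (by positivity)
    have ht2 : 9 * R ^ 2 ≤ 9 * R ^ 2 * ((1 - 3 * (x * R)) ^ 2)⁻¹ := by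
      have hy : 0 ≤ x * R := mul_nonneg hx.1.le hR.le
      have hprod : 0 ≤ (3 * (x * R)) * (2 - 3 * (x * R)) :=
        mul_nonneg (by linarith) (by linarith)
      have h2a : (1 - 3 * (x * R)) ^ 2 ≤ 1 := by
        simp only [pow_two] at hprod ⊢
        linarith [hprod]
      have hinv1 : (1:ℝ) ≤ ((1 - 3 * (x * R)) ^ 2)⁻¹ := by
        rw [one_le_inv_iff₀]
        exact ⟨by positivity, h2a⟩
      calc 9 * R ^ 2 = 9 * R ^ 2 * 1 := (mul_one _).symm
        _ ≤ 9 * R ^ 2 * ((1 - 3 * (x * R)) ^ 2)⁻¹ :=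
            mul_le_mul_of_nonneg_left hinv1 (by positivity)
    have ht3 : (α + 1) * R ^ 2 * ((1 + x * R) ^ 2)⁻¹ ≤ (α + 1) * R ^ 2 := by
      have hy3 : 0 ≤ x * R := mul_nonneg hx.1.le hR.le
      have h3a : (1:ℝ) ≤ (1 + x * R) ^ 2 := by
        have hprod2 : 0 ≤ (x * R) * (2 + x * R) := mul_nonneg hy3 (by linarith)
        simp only [pow_two] at hprod2 ⊢
        linarith [hprod2]
      have hi : ((1 + x * R) ^ 2)⁻¹ ≤ 1 := by
        rw [inv_le_one_iff₀]
        right; exact h3a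
      calc (α + 1) * R ^ 2 * ((1 + x * R) ^ 2)⁻¹
          ≤ (α + 1) * R ^ 2 * 1 := mul_le_mul_of_nonneg_left hi (by positivity)
        _ = (α + 1) * R ^ 2 := mul_one _
    have hαR : 0 < α * R ^ 2 := by positivity
    have hR2 : 0 < R ^ 2 := by positivity
    linarith [ht1, ht2, ht3, hαR, hR2]
  have hH0 : H 0 = 0 := by
    rw [hHdef]; simp
  have key2 : ∀ w z : ℝ, 0 < w → w < z → z < (3 * R)⁻¹ → H w = 0 → H z = 0 → False := by
    intro w z hw hwz hz hHw hHz
    have hzpos : (0:ℝ) < z := lt_trans hw hwz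
    have hm0 : (0:ℝ) ∈ Ico (0:ℝ) ((3 * R)⁻¹) := ⟨le_refl _, by positivity⟩
    have hmz : z ∈ Ico (0:ℝ) ((3 * R)⁻¹) := ⟨hzpos.le, hz⟩
    have hne : (0:ℝ) ≠ z := (ne_of_lt hzpos)
    have ht1 : 0 < 1 - w / z := by
      rw [sub_pos, div_lt_one hzpos]; exact hwz
    have ht2 : 0 < w / z := by positivity
    have hlt := hconv.2 hm0 hmz hne ht1 ht2 (by ring)
    have harg : (1 - w / z) • (0:ℝ) + (w / z) • z = w := by
      rw [smul_zero, zero_add, smul_eq_mul, div_mul_cancel₀ _ hzpos.ne']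
    rw [harg, hHw, hH0, hHz] at hlt
    simp at hlt
  -- IVT setup
  set W : ℝ := 1 + (3 * R)⁻¹ * Q with hW
  have hW1 : (1:ℝ) < W := by
    rw [hW]; linarith [mul_pos (inv_pos.mpr h3R) hQ0]
  set v : ℝ := W ^ (-α) with hv
  have hv0 : 0 < v := Real.rpow_pos_of_pos (by linarith) _
  have hWα : 2 ≤ W ^ α := by
    have h1 : Real.exp (K / α) ^ α ≤ (1 + (6 * R)⁻¹ * Q) ^ α :=
      Real.rpow_le_rpow (le_of_lt (Real.exp_pos _)) hC₀ hα0.le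
    have h2 : Real.exp (K / α) ^ α = Real.exp K := by
      rw [Real.rpow_def_of_pos (Real.exp_pos _), Real.log_exp]
      congr 1; field_simp
    have h3 : 2 ≤ Real.exp K := by
      rw [hK, Real.exp_add, Real.exp_log (by norm_num : (0:ℝ) < 2)]
      have h5 : 1 ≤ Real.exp ((α + 1) * Real.log (7/6)) := by
        apply Real.one_le_exp
        have := Real.log_nonneg (by norm_num : (1:ℝ) ≤ 7/6)
        positivity
      linarith
    have h4 : (1 + (6 * R)⁻¹ * Q) ^ α ≤ W ^ α := by
      apply Real.rpow_le_rpow (by positivity) ?_ hα0.le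
      rw [hW]
      have h6 : (6 * R)⁻¹ ≤ (3 * R)⁻¹ := by
        apply inv_anti₀ h3R; linarith
      linarith [mul_le_mul_of_nonneg_right h6 hQ0.le]
    linarith [h2 ▸ h1]
  have hvle : v ≤ 1/2 := by
    have hWα0 : (0:ℝ) < W ^ α := Real.rpow_pos_of_pos (by linarith) _
    rw [hv, Real.rpow_neg (by linarith : (0:ℝ) ≤ W)]
    calc (W ^ α)⁻¹ ≤ 2⁻¹ := inv_anti₀ (by norm_num) hWα
      _ = 1/2 := by norm_num
  set e₀ : ℝ := (6 * R)⁻¹ with he₀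
  set ε₁ : ℝ := (1 - v) * (3 * R)⁻¹ with hε₁
  have he₀pos : 0 < e₀ := by rw [he₀]; positivity
  have hv1 : v < 1 := by linarith
  have hε₁pos : 0 < ε₁ := mul_pos (by linarith) (inv_pos.mpr h3R)
  have hε₁lt : ε₁ < (3 * R)⁻¹ := by
    rw [hε₁]; linarith [mul_pos hv0 (inv_pos.mpr h3R)]
  have he₀le : e₀ ≤ ε₁ := by
    have h7 : e₀ = (1/2) * (3 * R)⁻¹ := by
      rw [he₀, show (6:ℝ) * R = 2 * (3 * R) by ring, mul_inv]; ring
    rw [h7, hε₁]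
    have h8 := mul_le_mul_of_nonneg_right (show (1:ℝ)/2 ≤ 1 - v by linarith)
      (inv_pos.mpr h3R).le
    linarith
  have he₀lt : e₀ < (3 * R)⁻¹ := he₀le.trans_lt hε₁lt
  have hHe₀ : H e₀ ≤ 0 := by
    have h2 : 1 - 3 * (e₀ * R) = 1/2 := by
      rw [he₀]; field_simp; ring
    have h3 : 1 + e₀ * R = 7/6 := by
      rw [he₀]; field_simp; ring
    have h0Q : 0 < 1 + e₀ * Q := by rw [he₀]; positivity
    have hKle : K ≤ α * Real.log (1 + e₀ * Q) := by
      have hlog : K / α ≤ Real.log (1 + e₀ * Q) := by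
        calc K / α = Real.log (Real.exp (K / α)) := (Real.log_exp _).symm
          _ ≤ Real.log (1 + e₀ * Q) := by
              apply (Real.log_le_log_iff (Real.exp_pos _) h0Q).mpr
              rw [he₀]; exact hC₀
      calc K = α * (K / α) := by field_simp
        _ ≤ α * Real.log (1 + e₀ * Q) := mul_le_mul_of_nonneg_left hlog hα0.le
    simp only [hHdef]
    rw [h2, h3]
    have hl2 : Real.log ((1:ℝ)/2) = -Real.log 2 := by rw [one_div, Real.log_inv]
    rw [hl2]
    rw [hK] at hKle
    linarith
  have hHε₁ : 0 < H ε₁ := by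
    have h13 : 1 - 3 * (ε₁ * R) = v := by
      rw [hε₁]; field_simp; ring
    have h0Q : 0 < 1 + ε₁ * Q := by positivity
    simp only [hHdef]
    have hA : Real.log (1 + ε₁ * Q) < Real.log W := by
      apply Real.log_lt_log h0Q
      rw [hW]
      have := mul_lt_mul_of_pos_right hε₁lt hQ0
      linarith
    have hB : Real.log v = -α * Real.log W := by
      rw [hv, Real.log_rpow (by linarith)]
    have hC : 0 ≤ Real.log (1 + ε₁ * R) :=
      Real.log_nonneg (by linarith [mul_pos hε₁pos hR])
    rw [h13, hB]
    have hh1 := mul_lt_mul_of_pos_left hA hα0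
    have hh2 := mul_nonneg (by linarith : (0:ℝ) ≤ α + 1) hC
    linarith
  have hsub : Icc e₀ ε₁ ⊆ Ico 0 ((3 * R)⁻¹) :=
    fun x hx => ⟨le_trans he₀pos.le hx.1, lt_of_le_of_lt hx.2 hε₁lt⟩
  obtain ⟨ε, hεmem, hεroot⟩ :=
    intermediate_value_Icc he₀le (hHc.mono hsub) ⟨hHe₀, hHε₁.le⟩
  have hε0 : 0 < ε := lt_of_lt_of_le he₀pos hεmem.1
  have hεlt : ε < (3 * R)⁻¹ := lt_of_le_of_lt hεmem.2 hε₁lt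
  obtain ⟨h1', h2', h3'⟩ := hpos ε hε0.le hεlt
  have hu1 : 1/6 ≤ ε * R := by
    have hh := mul_le_mul_of_nonneg_right hεmem.1 hR.le
    have he : e₀ * R = 1/6 := by rw [he₀]; field_simp
    linarith
  have hu2 : ε * R < 1/3 := by
    have hh := mul_lt_mul_of_pos_right hεlt hR
    have he : (3 * R)⁻¹ * R = 1/3 := by field_simp
    linarith
  have hlogroot : -(α * Real.log (1 + ε * Q)) - Real.log (1 - 3 * (ε * R))
      + (α + 1) * Real.log (1 + ε * R) = 0 := by
    have := hεroot
    simp only [hHdef] at this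
    exact this
  have key : (1 + ε * Q) ^ (-α) = (1 - 3 * (ε * R)) * (1 + ε * R) ^ (-α - 1) := by
    have hlog2 : Real.log (1 + ε * Q) * (-α)
        = Real.log (1 - 3 * (ε * R)) + Real.log (1 + ε * R) * (-α - 1) := by
      linear_combination hlogroot
    calc (1 + ε * Q) ^ (-α) = Real.exp (Real.log (1 + ε * Q) * (-α)) :=
          Real.rpow_def_of_pos h1' _
      _ = Real.exp (Real.log (1 - 3 * (ε * R))) * Real.exp (Real.log (1 + ε * R) * (-α - 1)) := by
          rw [hlog2, Real.exp_add]
      _ = (1 - 3 * (ε * R)) * (1 + ε * R) ^ (-α - 1) := by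
          rw [Real.exp_log h2', ← Real.rpow_def_of_pos h3']
  have hsplit : (1 + ε * R) ^ (-α) = (1 + ε * R) ^ (-α - 1) * (1 + ε * R) := by
    conv_lhs => rw [show (-α : ℝ) = -α - 1 + 1 by ring]
    rw [Real.rpow_add_one h3'.ne']
  have hP0 : 0 < (1 + ε * R) ^ (-α - 1) := Real.rpow_pos_of_pos h3' _
  have hB : (1 + ε * R) ^ (-α) - (1 + ε * Q) ^ (-α)
      = 4 * (ε * R) * (1 + ε * R) ^ (-α - 1) := by
    rw [key, hsplit]; ring
  have hBpos : 0 < (1 + ε * R) ^ (-α) - (1 + ε * Q) ^ (-α) := by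
    rw [hB]
    exact mul_pos (by linarith : (0:ℝ) < 4 * (ε * R)) hP0
  have hRR : (1:ℝ) + R / R = 2 := by rw [div_self hR.ne']; norm_num
  have h2b : (0:ℝ) < 2 ^ (-β) := Real.rpow_pos_of_pos (by norm_num) _
  set δv : ℝ := 2 ^ (-β) / ((1 + ε * R) ^ (-α) - (1 + ε * Q) ^ (-α)) with hδv
  have hδv0 : 0 < δv := div_pos h2b hBpos
  have hmatch : (1 + R / R) ^ (-β) = δv * ((1 + ε * R) ^ (-α) - (1 + ε * Q) ^ (-α)) := by
    rw [hRR, hδv, div_mul_cancel₀ _ hBpos.ne']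
  have dL : HasDerivAt (fun t : ℝ => (1 + t / R) ^ (-β))
      (1 / R * -β * (1 + R / R) ^ (-β - 1)) R := by
    have dinner : HasDerivAt (fun t : ℝ => 1 + t / R) (1 / R) R := by
      simpa using ((hasDerivAt_id R).div_const R).const_add 1
    exact dinner.rpow_const (Or.inl (by rw [hRR]; norm_num))
  refine ⟨δv, ε, hδv0, hε0, hmatch, ?_, ⟨?_, ?_⟩, ⟨?_, ?_⟩, ?_, ?_, ?_, ?_, ?_⟩
  · -- derivative matching
    have dR2 : HasDerivAt (fun t : ℝ => δv * ((1 + ε * t) ^ (-α) - (1 + ε * Q) ^ (-α)))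
        (δv * (ε * -α * (1 + ε * R) ^ (-α - 1))) R := by
      have dinner : HasDerivAt (fun t : ℝ => 1 + ε * t) ε R := by
        simpa using ((hasDerivAt_id R).const_mul ε).const_add 1
      exact ((dinner.rpow_const (Or.inl h3'.ne')).sub_const _).const_mul _
    have hgoal : ∀ P : ℝ, P ≠ 0 →
        1 / R * -β * (2 ^ (-β) * 2⁻¹) = 2 ^ (-β) / (4 * (ε * R) * P) * (ε * -(2 * β) * P) := by
      intro P hP
      field_simp [hP]
      ring
    rw [dL.deriv, dR2.deriv, hRR, hδv, hB,
      show (-β - 1 : ℝ) = -β + -1 by ring, Real.rpow_add (by norm_num : (0:ℝ) < 2),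
      Real.rpow_neg_one, hαβ]
    exact hgoal _ (Real.rpow_pos_of_pos h3' _).ne'
  · linarith [hu1]
  · linarith [hu2]
  · -- c₁ ≤ δ
    have hP1 : (1 + ε * R) ^ (-α - 1) ≤ 1 :=
      Real.rpow_le_one_of_one_le_of_nonpos (by linarith) (by linarith)
    have hBu : (1 + ε * R) ^ (-α) - (1 + ε * Q) ^ (-α) ≤ 4/3 := by
      rw [hB]
      calc 4 * (ε * R) * (1 + ε * R) ^ (-α - 1) ≤ (4/3) * 1 :=
            mul_le_mul (by linarith) hP1 hP0.le (by norm_num)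
        _ = 4/3 := mul_one _
    calc (3:ℝ)/4 * 2 ^ (-β) = 2 ^ (-β) / (4/3) := by ring
      _ ≤ δv := div_le_div_of_nonneg_left h2b.le hBpos hBu
  · -- δ ≤ c₂
    have hr43 : ((4:ℝ)/3) ^ (-α - 1) ≤ (1 + ε * R) ^ (-α - 1) :=
      Real.rpow_le_rpow_of_nonpos h3' (by linarith) (by linarith)
    have hBl : (2/3) * ((4:ℝ)/3) ^ (-α - 1)
        ≤ (1 + ε * R) ^ (-α) - (1 + ε * Q) ^ (-α) := by
      rw [hB]
      exact mul_le_mul (by linarith) hr43 (Real.rpow_nonneg (by norm_num) _) (by linarith)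
    have hBlpos : 0 < (2/3) * ((4:ℝ)/3) ^ (-α - 1) := by positivity
    calc δv ≤ 2 ^ (-β) / ((2/3) * ((4:ℝ)/3) ^ (-α - 1)) :=
          div_le_div_of_nonneg_left h2b.le hBlpos hBl
      _ = 3/2 * 2 ^ (-β) * (4/3) ^ (α + 1) := by
          rw [show (-α - 1:ℝ) = -(α + 1) by ring,
            Real.rpow_neg (by norm_num : (0:ℝ) ≤ 4/3)]
          have hne : ((4:ℝ)/3) ^ (α + 1) ≠ 0 :=
            (Real.rpow_pos_of_pos (by norm_num) _).ne'
          field_simp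
  · -- nonneg
    intro t ht
    by_cases hle : t ≤ R
    · simp only [if_pos hle]
      apply Real.rpow_nonneg
      have := div_nonneg ht.1 hR.le
      linarith
    · simp only [if_neg hle]
      apply mul_nonneg hδv0.le
      rw [sub_nonneg]
      apply Real.rpow_le_rpow_of_nonpos
        (by linarith [mul_nonneg hε0.le ht.1])
        (by linarith [mul_le_mul_of_nonneg_left ht.2 hε0.le]) (by linarith)
  · -- antitone
    have hf1 : ∀ u w : ℝ, 0 ≤ u → u ≤ w → (1 + w / R) ^ (-β) ≤ (1 + u / R) ^ (-β) := by
      intro u w hu huw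
      apply Real.rpow_le_rpow_of_nonpos
      · have := div_nonneg hu hR.le; linarith
      · gcongr
      · linarith
    have hf2 : ∀ u w : ℝ, 0 ≤ u → u ≤ w →
        δv * ((1 + ε * w) ^ (-α) - (1 + ε * Q) ^ (-α))
          ≤ δv * ((1 + ε * u) ^ (-α) - (1 + ε * Q) ^ (-α)) := by
      intro u w hu huw
      apply mul_le_mul_of_nonneg_left _ hδv0.le
      apply sub_le_sub_right
      apply Real.rpow_le_rpow_of_nonpos (by linarith [mul_nonneg hε0.le hu])
        (by linarith [mul_le_mul_of_nonneg_left huw hε0.le]) (by linarith)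
    intro x hx y hy hxy
    by_cases hyR : y ≤ R
    · have hxR : x ≤ R := le_trans hxy hyR
      simp only [if_pos hyR, if_pos hxR]
      exact hf1 x y hx.1 hxy
    · by_cases hxR : x ≤ R
      · simp only [if_pos hxR, if_neg hyR]
        calc δv * ((1 + ε * y) ^ (-α) - (1 + ε * Q) ^ (-α))
            ≤ δv * ((1 + ε * R) ^ (-α) - (1 + ε * Q) ^ (-α)) :=
              hf2 R y hR.le (by linarith)
          _ = (1 + R / R) ^ (-β) := hmatch.symm
          _ ≤ (1 + x / R) ^ (-β) := hf1 x R hx.1 hxR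
      · simp only [if_neg hyR, if_neg hxR]
        exact hf2 x y (by linarith) hxy
  · -- convexity piece 1
    refine ⟨convex_Icc _ _, ?_⟩
    intro x hx y hy p q hp hq hpq
    simp only [smul_eq_mul]
    have hmem1 : (1 + x / R) ∈ Ioi (0:ℝ) := by
      rw [mem_Ioi]; have := div_nonneg hx.1 hR.le; linarith
    have hmem2 : (1 + y / R) ∈ Ioi (0:ℝ) := by
      rw [mem_Ioi]; have := div_nonneg hy.1 hR.le; linarith
    have hcv := (rpow_neg_convexOn (by linarith : -β ≤ 0)).2 hmem1 hmem2 hp hq hpq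
    simp only [smul_eq_mul] at hcv
    have harg : 1 + (p * x + q * y) / R = p * (1 + x / R) + q * (1 + y / R) := by
      field_simp
      linear_combination -R * hpq
    rw [harg]
    exact hcv
  · -- convexity piece 2
    refine ⟨convex_Icc _ _, ?_⟩
    intro x hx y hy p q hp hq hpq
    obtain rfl : q = 1 - p := by linarith
    simp only [smul_eq_mul]
    have hmem1 : (1 + ε * x) ∈ Ioi (0:ℝ) := by
      rw [mem_Ioi]; linarith [hu1, mul_le_mul_of_nonneg_left hx.1 hε0.le]
    have hmem2 : (1 + ε * y) ∈ Ioi (0:ℝ) := by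
      rw [mem_Ioi]; linarith [hu1, mul_le_mul_of_nonneg_left hy.1 hε0.le]
    have hcv := (rpow_neg_convexOn (by linarith : -α ≤ 0)).2 hmem1 hmem2 hp hq hpq
    simp only [smul_eq_mul] at hcv
    have harg : 1 + ε * (p * x + (1 - p) * y) = p * (1 + ε * x) + (1 - p) * (1 + ε * y) := by
      ring
    rw [harg]
    calc δv * ((p * (1 + ε * x) + (1 - p) * (1 + ε * y)) ^ (-α) - (1 + ε * Q) ^ (-α))
        ≤ δv * ((p * (1 + ε * x) ^ (-α) + (1 - p) * (1 + ε * y) ^ (-α)) - (1 + ε * Q) ^ (-α)) := by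
          exact mul_le_mul_of_nonneg_left (sub_le_sub_right hcv _) hδv0.le
      _ = p * (δv * ((1 + ε * x) ^ (-α) - (1 + ε * Q) ^ (-α)))
            + (1 - p) * (δv * ((1 + ε * y) ^ (-α) - (1 + ε * Q) ^ (-α))) := by
          ring
  · -- uniqueness
    intro δ' ε' hδ'0 hε'0 heq1 heq2
    have h1'' : 0 < 1 + ε' * Q := by positivity
    have h3'' : 0 < 1 + ε' * R := by positivity
    have dR' : HasDerivAt (fun t : ℝ => δ' * ((1 + ε' * t) ^ (-α) - (1 + ε' * Q) ^ (-α)))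
        (δ' * (ε' * -α * (1 + ε' * R) ^ (-α - 1))) R := by
      have dinner : HasDerivAt (fun t : ℝ => 1 + ε' * t) ε' R := by
        simpa using ((hasDerivAt_id R).const_mul ε').const_add 1
      exact ((dinner.rpow_const (Or.inl h3''.ne')).sub_const _).const_mul _
    have e2 : 1 / R * -β * (1 + R / R) ^ (-β - 1)
        = δ' * (ε' * -α * (1 + ε' * R) ^ (-α - 1)) := by
      rw [← dL.deriv, ← dR'.deriv]; exact heq2
    rw [hRR, show (-β - 1 : ℝ) = -β + -1 by ring,
      Real.rpow_add (by norm_num : (0:ℝ) < 2), Real.rpow_neg_one] at e2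
    rw [hRR] at heq1
    set P' : ℝ := (1 + ε' * R) ^ (-α - 1) with hP'
    set S' : ℝ := (1 + ε' * R) ^ (-α) with hS'
    set X' : ℝ := (1 + ε' * Q) ^ (-α) with hX'
    have hP'0 : 0 < P' := by rw [hP']; exact Real.rpow_pos_of_pos h3'' _
    have hX'0 : 0 < X' := by rw [hX']; exact Real.rpow_pos_of_pos h1'' _
    have hsplit' : S' = P' * (1 + ε' * R) := by
      rw [hS', hP']
      conv_lhs => rw [show (-α : ℝ) = -α - 1 + 1 by ring]
      rw [Real.rpow_add_one h3''.ne']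
    have hT : δ' * ε' * P' * (2 * β) * (2 * R) = 2 ^ (-β) * β := by
      have h2 : δ' * (α * P' * ε') = β * (2 ^ (-β) * 2⁻¹) * (1 / R) := by
        linear_combination e2
      rw [hαβ] at h2
      have h3 : δ' * ε' * P' * (2 * β) = β * (2 ^ (-β) * 2⁻¹) * (1 / R) := by
        linear_combination h2
      calc δ' * ε' * P' * (2 * β) * (2 * R)
          = (β * (2 ^ (-β) * 2⁻¹) * (1 / R)) * (2 * R) := by rw [h3]
        _ = 2 ^ (-β) * β := by field_simp
    have hMul : δ' * β * X' = δ' * β * ((1 - 3 * (ε' * R)) * P') := by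
      linear_combination β * heq1 + β * δ' * hsplit' + hT
    have key' : X' = (1 - 3 * (ε' * R)) * P' :=
      mul_left_cancel₀ (mul_pos hδ'0 hβ0).ne' hMul
    have h13' : 0 < 1 - 3 * (ε' * R) := by
      by_contra hcon
      push_neg at hcon
      have hX'np : X' ≤ 0 := by
        rw [key']
        exact mul_nonpos_iff.mpr (Or.inr ⟨by linarith, hP'0.le⟩)
      linarith
    have hε'lt : ε' < (3 * R)⁻¹ := by
      rw [show (3 * R)⁻¹ = 1/(3 * R) by rw [one_div], lt_div_iff₀ h3R]
      linarith
    have hHε' : H ε' = 0 := by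
      simp only [hHdef]
      have hlog' : -α * Real.log (1 + ε' * Q)
          = Real.log (1 - 3 * (ε' * R)) + (-α - 1) * Real.log (1 + ε' * R) := by
        rw [← Real.log_rpow h1'', ← Real.log_rpow h3'',
          ← Real.log_mul h13'.ne' (Real.rpow_pos_of_pos h3'' _).ne']
        rw [← hX', ← hP', key']
      linear_combination hlog'
    have hε'ε : ε' = ε := by
      rcases lt_trichotomy ε' ε with h | h | h
      · exact (key2 ε' ε hε'0 h hεlt hHε' hεroot).elim
      · exact h
      · exact (key2 ε ε' hε0 h hε'lt hεroot hHε').elim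
    refine ⟨?_, hε'ε⟩
    rw [hS', hX'] at heq1
    rw [hε'ε] at heq1
    have hfin : δ' * ((1 + ε * R) ^ (-α) - (1 + ε * Q) ^ (-α))
        = δv * ((1 + ε * R) ^ (-α) - (1 + ε * Q) ^ (-α)) := by
      rw [← heq1, hδv, div_mul_cancel₀ _ hBpos.ne']
    exact mul_right_cancel₀ hBpos.ne' hfin
end

section
/- Let (X,d) be a metric space, let μ be a Borel measure on X, and fix a point x₀ ∈ X. Denote by B(Q) the open metric ball of center x₀ and radius Q, and set V(r) = μ(B(r)). Let α > 0 and assume V(r) < ∞ for every r > 0 and that μ has (2α+2)-subpolynomial volume growth, i.e. lim_{r→∞} V(r)/r^{2α+2} = 0. Then for every ε > 0, lim_{Q→∞} (1 + εQ)^{−α} ∫_{B(Q)} (1 + ε·d(x,x₀))^{−α−2} dμ(x) = 0. -/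
open Real MeasureTheory Filter

/-- Lemma 3.3: if a Borel measure `μ` on a metric space has finite balls and
`(2α+2)`-subpolynomial volume growth (`V(r)/r^{2α+2} → 0`), then for every
`ε > 0`, `(1+εQ)^{-α} ∫_{B(Q)} (1+ε·d(x,x₀))^{-α-2} dμ(x) → 0` as `Q → ∞`. -/
theorem stmt_3 {X : Type*} [MetricSpace X] [MeasurableSpace X] [BorelSpace X]
    (μ : Measure X) (x₀ : X) (α : ℝ) (hα : 0 < α)
    (hfin : ∀ r : ℝ, 0 < r → μ (Metric.ball x₀ r) < ⊤)
    (hsub : Tendsto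
        (fun r : ℝ => (μ (Metric.ball x₀ r)).toReal / r ^ (2 * α + 2))
        atTop (nhds 0))
    (ε : ℝ) (hε : 0 < ε) :
    Tendsto (fun Q : ℝ => (1 + ε * Q) ^ (-α) *
        ∫ x in Metric.ball x₀ Q, (1 + ε * dist x x₀) ^ (-α - 2) ∂μ)
      atTop (nhds 0) := by
  set f : X → ℝ := fun x => (1 + ε * dist x x₀) ^ (-α - 2) with hfdef
  have hb : ∀ x : X, (1:ℝ) ≤ 1 + ε * dist x x₀ := fun x => by
    nlinarith [dist_nonneg (x := x) (y := x₀)]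
  have hf0 : ∀ x, 0 ≤ f x := fun x => Real.rpow_nonneg (by linarith [hb x]) _
  have hf1 : ∀ x, f x ≤ 1 := fun x =>
    Real.rpow_le_one_of_one_le_of_nonpos (hb x) (by linarith)
  have hfc : Continuous f := by
    apply Continuous.rpow_const
    · fun_prop
    · intro x
      exact Or.inl (by nlinarith [dist_nonneg (x := x) (y := x₀)])
  have hint : ∀ r : ℝ, IntegrableOn f (Metric.ball x₀ r) μ := by
    intro r
    rcases le_or_gt r 0 with hr | hr
    · rw [Metric.ball_eq_empty.2 hr]; exact integrableOn_empty
    · refine Integrable.mono' (g := fun _ => (1:ℝ))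
        (integrableOn_const (hfin r hr).ne)
        hfc.aestronglyMeasurable.restrict (ae_of_all _ fun x => ?_)
      rw [Real.norm_eq_abs, abs_of_nonneg (hf0 x)]; exact hf1 x
  have hmono : ∀ {r r' : ℝ}, r ≤ r' →
      ∫ x in Metric.ball x₀ r, f x ∂μ ≤ ∫ x in Metric.ball x₀ r', f x ∂μ := by
    intro r r' h
    exact setIntegral_mono_set (hint r') (ae_of_all _ hf0)
      (HasSubset.Subset.eventuallyLE (Metric.ball_subset_ball h))
  have hstep : ∀ r : ℝ, 0 < r →
      ∫ x in Metric.ball x₀ (2*r), f x ∂μ ≤ (∫ x in Metric.ball x₀ r, f x ∂μ)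
        + (ε*r) ^ (-α-2) * (μ (Metric.ball x₀ (2*r))).toReal := by
    intro r hr
    have hss : Metric.ball x₀ r ⊆ Metric.ball x₀ (2*r) :=
      Metric.ball_subset_ball (by linarith)
    have hA : MeasurableSet (Metric.ball x₀ (2*r) \ Metric.ball x₀ r) :=
      measurableSet_ball.diff measurableSet_ball
    have hAfin : μ (Metric.ball x₀ (2*r) \ Metric.ball x₀ r) < ⊤ :=
      lt_of_le_of_lt (measure_mono Set.diff_subset) (hfin _ (by linarith))
    have key : ∫ x in Metric.ball x₀ (2*r), f x ∂μ
        = (∫ x in Metric.ball x₀ r, f x ∂μ)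
          + ∫ x in Metric.ball x₀ (2*r) \ Metric.ball x₀ r, f x ∂μ := by
      rw [← setIntegral_union disjoint_sdiff_self_right hA (hint r)
        ((hint (2*r)).mono_set Set.diff_subset), Set.union_diff_cancel hss]
    rw [key]
    refine add_le_add (le_refl _) ?_
    have hbound : ∀ x ∈ Metric.ball x₀ (2*r) \ Metric.ball x₀ r,
        ‖f x‖ ≤ (1+ε*r) ^ (-α-2) := by
      intro x hx
      have hd : r ≤ dist x x₀ := le_of_not_gt fun h => hx.2 (Metric.mem_ball.mpr h)
      rw [Real.norm_eq_abs, abs_of_nonneg (hf0 x)]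
      exact Real.rpow_le_rpow_of_nonpos (by nlinarith) (by nlinarith) (by linarith)
    calc ∫ x in Metric.ball x₀ (2*r) \ Metric.ball x₀ r, f x ∂μ
        ≤ ‖∫ x in Metric.ball x₀ (2*r) \ Metric.ball x₀ r, f x ∂μ‖ := le_abs_self _
      _ ≤ (1+ε*r) ^ (-α-2) * (μ (Metric.ball x₀ (2*r) \ Metric.ball x₀ r)).toReal :=
          norm_setIntegral_le_of_norm_le_const hAfin hbound
      _ ≤ (ε*r) ^ (-α-2) * (μ (Metric.ball x₀ (2*r))).toReal := by
          refine mul_le_mul ?_ ?_ ENNReal.toReal_nonneg (Real.rpow_nonneg (by positivity) _)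
          · exact Real.rpow_le_rpow_of_nonpos (by positivity) (by linarith) (by linarith)
          · exact ENNReal.toReal_mono (hfin _ (by linarith)).ne
              (measure_mono Set.diff_subset)
  -- characterization of the limit
  rw [NormedAddCommGroup.tendsto_nhds_zero]
  intro η hη
  -- constants
  set c : ℝ := (2:ℝ)^α - 1 with hcdef
  have hc : 0 < c := by
    have h1 : (2:ℝ)^(0:ℝ) < (2:ℝ)^α := Real.rpow_lt_rpow_of_exponent_lt one_lt_two hα
    rw [Real.rpow_zero] at h1
    simp only [hcdef]; linarith
  set K : ℝ := ε^(-α-2) * (2:ℝ)^(2*α+2) with hKdef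
  have hK : 0 < K := by positivity
  set K₂ : ℝ := K * (2:ℝ)^α / c with hK₂def
  have hK₂ : 0 < K₂ := by positivity
  set B : ℝ := K₂ * ε^(-α) with hBdef
  have hB : 0 < B := by positivity
  set δ : ℝ := η / (2*B + 1) with hδdef
  have hδ : 0 < δ := by positivity
  have hδB : δ * B < η / 2 := by
    have h1 : δ * (2*B+1) = η := div_mul_cancel₀ _ (by positivity)
    nlinarith
  -- volume bound from subpolynomial growth
  obtain ⟨R, hR⟩ := eventually_atTop.mp (hsub.eventually_lt_const hδ)
  have hV : ∀ r : ℝ, R ≤ r → 0 < r →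
      (μ (Metric.ball x₀ r)).toReal ≤ δ * r ^ (2*α+2) := by
    intro r h1 h2
    have h3 := hR r h1
    rw [div_lt_iff₀ (by positivity)] at h3
    linarith
  obtain ⟨n₀, hn₀⟩ := pow_unbounded_of_one_lt (max R 1) (one_lt_two (α := ℝ))
  set I₀ : ℝ := ∫ x in Metric.ball x₀ ((2:ℝ)^n₀), f x ∂μ with hI₀def
  -- iteration over dyadic scales
  have hiter : ∀ M : ℕ, ∫ x in Metric.ball x₀ ((2:ℝ)^M), f x ∂μ
      ≤ I₀ + δ * K * ((2:ℝ)^α) ^ M / c := by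
    intro M
    induction M with
    | zero =>
        have h1 : ((2:ℝ)^(0:ℕ)) ≤ 2^n₀ := by
          simpa using one_le_pow₀ (one_le_two (α := ℝ))
        have h2 : (0:ℝ) ≤ δ * K * ((2:ℝ)^α) ^ 0 / c := by positivity
        refine le_trans (hmono h1) ?_
        rw [hI₀def]
        linarith
    | succ M ih =>
        rcases le_or_gt (M+1) n₀ with hMn | hMn
        · have h1 : ((2:ℝ)^(M+1)) ≤ 2^n₀ := pow_le_pow_right₀ one_le_two hMn
          have h2 : (0:ℝ) ≤ δ * K * ((2:ℝ)^α) ^ (M+1) / c := by positivity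
          linarith [hmono h1, hI₀def]
        · have hr : (0:ℝ) < 2^M := by positivity
          have h2 : (2:ℝ) * 2^M = 2^(M+1) := by rw [pow_succ]; ring
          have hs := hstep ((2:ℝ)^M) hr
          rw [h2] at hs
          have hRle : R ≤ (2:ℝ)^(M+1) := by
            have ha : (2:ℝ)^n₀ ≤ 2^(M+1) := pow_le_pow_right₀ one_le_two (by omega)
            have hbb := le_max_left R 1
            linarith [hn₀]
          have hV1 : (μ (Metric.ball x₀ ((2:ℝ)^(M+1)))).toReal
              ≤ δ * ((2:ℝ)^(M+1)) ^ (2*α+2) := hV _ hRle (by positivity)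
          have hpow : (ε*(2:ℝ)^M) ^ (-α-2) * ((2:ℝ)^(M+1)) ^ (2*α+2)
              = K * ((2:ℝ)^α) ^ M := by
            rw [Real.mul_rpow hε.le (by positivity), ← Real.rpow_natCast (2:ℝ) M,
              ← Real.rpow_natCast (2:ℝ) (M+1), ← Real.rpow_natCast ((2:ℝ)^α) M,
              ← Real.rpow_mul (by norm_num : (0:ℝ) ≤ 2),
              ← Real.rpow_mul (by norm_num : (0:ℝ) ≤ 2),
              ← Real.rpow_mul (by norm_num : (0:ℝ) ≤ 2), hKdef,
              mul_assoc, mul_assoc, ← Real.rpow_add two_pos, ← Real.rpow_add two_pos]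
            congr 2
            push_cast
            ring
          have hinc : (ε*(2:ℝ)^M) ^ (-α-2) * (μ (Metric.ball x₀ ((2:ℝ)^(M+1)))).toReal
              ≤ δ * (K * ((2:ℝ)^α) ^ M) := by
            calc (ε*(2:ℝ)^M) ^ (-α-2) * (μ (Metric.ball x₀ ((2:ℝ)^(M+1)))).toReal
                ≤ (ε*(2:ℝ)^M) ^ (-α-2) * (δ * ((2:ℝ)^(M+1)) ^ (2*α+2)) :=
                  mul_le_mul_of_nonneg_left hV1 (Real.rpow_nonneg (by positivity) _)
              _ = δ * (K * ((2:ℝ)^α) ^ M) := by rw [← hpow]; ring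
          have hq : ((2:ℝ)^α) = c + 1 := by rw [hcdef]; ring
          have hgeom : δ * K * ((2:ℝ)^α)^M / c + δ * (K * ((2:ℝ)^α)^M)
              = δ * K * ((2:ℝ)^α)^(M+1) / c := by
            rw [pow_succ, hq]
            field_simp
            ring
          linarith [hs, ih, hinc]
  -- for each Q ≥ 1, choose a dyadic scale just above Q
  have hQpow : ∀ Q : ℝ, 1 ≤ Q → ∃ M : ℕ, Q ≤ 2^M ∧ (2:ℝ)^M ≤ 2*Q := by
    intro Q hQ
    have hex : ∃ n : ℕ, Q ≤ (2:ℝ)^n :=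
      (pow_unbounded_of_one_lt Q one_lt_two).imp fun n h => h.le
    classical
    refine ⟨Nat.find hex, Nat.find_spec hex, ?_⟩
    rcases Nat.eq_zero_or_pos (Nat.find hex) with h0 | hpos
    · rw [h0]; norm_num; linarith
    · have hmin := Nat.find_min hex (show Nat.find hex - 1 < Nat.find hex by omega)
      push_neg at hmin
      have hE : (2:ℝ)^(Nat.find hex) = 2 * 2^(Nat.find hex - 1) := by
        rw [← pow_succ']
        congr 1
        omega
      rw [hE]
      nlinarith
  -- smallness of the first term
  have h1t : Tendsto (fun Q : ℝ => (1+ε*Q)^(-α) * I₀) atTop (nhds 0) := by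
    have h2 : Tendsto (fun Q : ℝ => 1+ε*Q) atTop atTop :=
      tendsto_atTop_add_const_left _ 1 (Tendsto.const_mul_atTop hε tendsto_id)
    simpa using ((tendsto_rpow_neg_atTop hα).comp h2).mul_const I₀
  filter_upwards [h1t.eventually_lt_const (by linarith : (0:ℝ) < η/2),
    eventually_ge_atTop (1:ℝ)] with Q hQsmall hQ1
  have hQ0 : (0:ℝ) < Q := by linarith
  have hrp : (0:ℝ) ≤ (1+ε*Q)^(-α) := Real.rpow_nonneg (by positivity) _
  have hI0 : (0:ℝ) ≤ ∫ x in Metric.ball x₀ Q, f x ∂μ :=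
    setIntegral_nonneg measurableSet_ball fun x _ => hf0 x
  rw [Real.norm_eq_abs, abs_of_nonneg (by positivity)]
  obtain ⟨M, hQM, hM2Q⟩ := hQpow Q hQ1
  -- integral bound
  have hIb : ∫ x in Metric.ball x₀ Q, f x ∂μ ≤ I₀ + δ * K₂ * Q^α := by
    have h1 := le_trans (hmono hQM) (hiter M)
    have h2 : ((2:ℝ)^α)^M = ((2:ℝ)^M)^α := by
      rw [← Real.rpow_natCast ((2:ℝ)^α) M, ← Real.rpow_natCast (2:ℝ) M,
        ← Real.rpow_mul (by norm_num : (0:ℝ) ≤ 2),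
        ← Real.rpow_mul (by norm_num : (0:ℝ) ≤ 2), mul_comm]
    have h3 : ((2:ℝ)^M)^α ≤ (2*Q)^α :=
      Real.rpow_le_rpow (by positivity) hM2Q hα.le
    have h4 : ((2:ℝ)*Q)^α = 2^α * Q^α := Real.mul_rpow (by norm_num) hQ0.le
    have h5 : δ * K * ((2:ℝ)^α)^M / c ≤ δ * K₂ * Q^α := by
      rw [hK₂def]
      rw [h2] at *
      calc δ * K * ((2:ℝ)^M)^α / c ≤ δ * K * (2^α * Q^α) / c := by
            rw [← h4]
            gcongr
      _ = δ * (K * 2^α / c) * Q^α := by ring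
    linarith
  -- final computation
  have hfrac : (1+ε*Q)^(-α) * Q^α ≤ ε^(-α) := by
    have h1 : (1+ε*Q)^(-α) ≤ (ε*Q)^(-α) :=
      Real.rpow_le_rpow_of_nonpos (by positivity) (by linarith) (by linarith)
    have h2 : (ε*Q)^(-α) = ε^(-α) * Q^(-α) := Real.mul_rpow hε.le hQ0.le
    have h3 : Q^(-α) * Q^α = 1 := by
      rw [← Real.rpow_add hQ0]; simp
    have h4 : (0:ℝ) ≤ Q^α := Real.rpow_nonneg hQ0.le _
    calc (1+ε*Q)^(-α) * Q^α ≤ (ε*Q)^(-α) * Q^α := by gcongr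
      _ = ε^(-α) * (Q^(-α) * Q^α) := by rw [h2]; ring
      _ = ε^(-α) := by rw [h3, mul_one]
  calc (1+ε*Q)^(-α) * ∫ x in Metric.ball x₀ Q, f x ∂μ
      ≤ (1+ε*Q)^(-α) * (I₀ + δ * K₂ * Q^α) := mul_le_mul_of_nonneg_left hIb hrp
    _ = (1+ε*Q)^(-α) * I₀ + δ * K₂ * ((1+ε*Q)^(-α) * Q^α) := by ring
    _ ≤ η/2 + δ * K₂ * ε^(-α) := by
        refine add_le_add hQsmall.le ?_
        gcongr
    _ = η/2 + δ * B := by rw [hBdef]; ring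
    _ < η := by linarith
end

section
/- Let n ≥ 1 and let W : ℝⁿ → ℝ be a locally integrable function. Assume there exists a compact set K ⊂ ℝⁿ such that for every C¹ function ψ : ℝⁿ → ℝ with compact support contained in ℝⁿ \ K one has 0 ≤ ∫_{ℝⁿ} (‖∇ψ(x)‖² + W(x)ψ(x)²) dx. Then there exists a locally integrable function P : ℝⁿ → ℝ with compact support such that for every C¹ function ψ : ℝⁿ → ℝ with compact support, 0 ≤ ∫_{ℝⁿ} (‖∇ψ(x)‖² + (W(x) + P(x))ψ(x)²) dx. -/
open MeasureTheory Metric Set Filter Real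
open scoped RealInnerProductSpace

section helpers
variable {F : Type*} [NormedAddCommGroup F] [InnerProductSpace ℝ F] [CompleteSpace F]

lemma grad_cont {g : F → ℝ} (hg : ContDiff ℝ 1 g) : Continuous (fun x => gradient g x) := by
  have : (fun x => gradient g x) =
      fun x => (InnerProductSpace.toDual ℝ F).symm (fderiv ℝ g x) := rfl
  rw [this]
  exact (InnerProductSpace.toDual ℝ F).symm.continuous.comp (hg.continuous_fderiv one_ne_zero)

lemma grad_zero_outside {g : F → ℝ} {x : F} (hx : x ∉ tsupport g) : gradient g x = 0 := by
  have h : g =ᶠ[nhds x] (fun _ => (0:ℝ)) := notMem_tsupport_iff_eventuallyEq.mp hx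
  rw [h.gradient_eq, gradient_fun_const]

lemma grad_mul {g h : F → ℝ} (hg : ContDiff ℝ 1 g) (hh : ContDiff ℝ 1 h) (x : F) :
    gradient (fun y => g y * h y) x = g x • gradient h x + h x • gradient g x := by
  have hfd : fderiv ℝ (fun y => g y * h y) x
      = g x • fderiv ℝ h x + h x • fderiv ℝ g x :=
    fderiv_fun_mul (hg.differentiable one_ne_zero x) (hh.differentiable one_ne_zero x)
  show (InnerProductSpace.toDual ℝ F).symm _ = _
  rw [hfd, map_add, _root_.map_smul, _root_.map_smul]
  rfl

omit [CompleteSpace F] in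
lemma ims_abstract (a b c : F) (s t p : ℝ) (h2 : s • b + t • c = 0) (h1 : s^2 + t^2 = 1) :
    ‖s • a + p • b‖^2 + ‖t • a + p • c‖^2 = ‖a‖^2 + p^2 * (‖b‖^2 + ‖c‖^2) := by
  have e1 := norm_add_sq_real (s • a) (p • b)
  have e2 := norm_add_sq_real (t • a) (p • c)
  have hcross : ⟪s • a, p • b⟫ + ⟪t • a, p • c⟫ = 0 := by
    have : ⟪s • a, p • b⟫ + ⟪t • a, p • c⟫ = p * ⟪a, s • b + t • c⟫ := by
      rw [inner_add_right, real_inner_smul_left, real_inner_smul_right,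
        real_inner_smul_left, real_inner_smul_right, real_inner_smul_right,
        real_inner_smul_right]
      ring
    rw [this, h2, inner_zero_right, mul_zero]
  have n1 : ‖s • a‖^2 = s^2 * ‖a‖^2 := by rw [norm_smul]; rw [mul_pow, Real.norm_eq_abs, sq_abs]
  have n2 : ‖t • a‖^2 = t^2 * ‖a‖^2 := by rw [norm_smul]; rw [mul_pow, Real.norm_eq_abs, sq_abs]
  have n3 : ‖p • b‖^2 = p^2 * ‖b‖^2 := by rw [norm_smul]; rw [mul_pow, Real.norm_eq_abs, sq_abs]
  have n4 : ‖p • c‖^2 = p^2 * ‖c‖^2 := by rw [norm_smul]; rw [mul_pow, Real.norm_eq_abs, sq_abs]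
  rw [e1, e2, n1, n2, n3, n4]
  linear_combination 2 * hcross + ‖a‖^2 * h1

lemma grad_circle {u v : F → ℝ} (hu : ContDiff ℝ 1 u) (hv : ContDiff ℝ 1 v)
    (huv : ∀ y, u y ^ 2 + v y ^ 2 = 1) (x : F) :
    u x • gradient u x + v x • gradient v x = 0 := by
  have hdu := (hu.differentiable one_ne_zero x).hasFDerivAt
  have hdv := (hv.differentiable one_ne_zero x).hasFDerivAt
  have hd1 : HasFDerivAt (fun y => u y * u y + v y * v y)
      ((u x • fderiv ℝ u x + u x • fderiv ℝ u x) + (v x • fderiv ℝ v x + v x • fderiv ℝ v x)) x :=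
    (hdu.mul hdu).add (hdv.mul hdv)
  have hconst : (fun y => u y * u y + v y * v y) = fun _ => (1:ℝ) := by
    funext y; linear_combination huv y
  have hd2 : HasFDerivAt (fun y => u y * u y + v y * v y) (0 : F →L[ℝ] ℝ) x := by
    rw [hconst]; exact hasFDerivAt_const 1 x
  have hz := hd1.unique hd2
  have hz2 : (2:ℝ) • (u x • fderiv ℝ u x + v x • fderiv ℝ v x) = 0 := by
    rw [two_smul, ← hz]; abel
  have hz3 : u x • fderiv ℝ u x + v x • fderiv ℝ v x = 0 := by
    rcases smul_eq_zero.mp hz2 with h | h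
    · norm_num at h
    · exact h
  have := congrArg (InnerProductSpace.toDual ℝ F).symm hz3
  rwa [map_add, _root_.map_smul, _root_.map_smul, map_zero] at this

lemma ims_pointwise {u v ψ : F → ℝ} (hu : ContDiff ℝ 1 u) (hv : ContDiff ℝ 1 v)
    (hψ : ContDiff ℝ 1 ψ) (huv : ∀ y, u y ^ 2 + v y ^ 2 = 1) (x : F) :
    ‖gradient (fun y => u y * ψ y) x‖^2 + ‖gradient (fun y => v y * ψ y) x‖^2
      = ‖gradient ψ x‖^2 + ψ x ^ 2 * (‖gradient u x‖^2 + ‖gradient v x‖^2) := by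
  rw [grad_mul hu hψ x, grad_mul hv hψ x]
  exact ims_abstract (gradient ψ x) (gradient u x) (gradient v x) (u x) (v x) (ψ x)
    (grad_circle hu hv huv x) (huv x)

end helpers

section intHelpers
variable {n : ℕ}

lemma int_gradsq {φ : EuclideanSpace ℝ (Fin n) → ℝ} (hφ : ContDiff ℝ 1 φ)
    (hφc : HasCompactSupport φ) :
    Integrable (fun x => ‖gradient φ x‖^2) volume := by
  apply Continuous.integrable_of_hasCompactSupport ((grad_cont hφ).norm.pow 2)
  apply HasCompactSupport.intro hφc
  intro x hx
  simp [grad_zero_outside hx]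

lemma hcs_sq {φ : EuclideanSpace ℝ (Fin n) → ℝ} (hφc : HasCompactSupport φ) :
    HasCompactSupport (fun x => φ x ^ 2) := by
  apply HasCompactSupport.intro hφc
  intro x hx
  simp [image_eq_zero_of_notMem_tsupport hx]

lemma int_Wsq {W φ : EuclideanSpace ℝ (Fin n) → ℝ} (hW : LocallyIntegrable W volume)
    (hφ : Continuous φ) (hφc : HasCompactSupport φ) :
    Integrable (fun x => W x * φ x ^ 2) volume := by
  have h := hW.integrable_smul_left_of_hasCompactSupport (hφ.pow 2) (hcs_sq hφc)
  simpa [smul_eq_mul, mul_comm] using h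

end intHelpers
/-- Proposition 4.1 (substantive direction), Euclidean case: if the quadratic
form `ψ ↦ ∫ (‖∇ψ‖² + Wψ²)` is non-negative on `C¹` compactly supported
functions supported outside a compact set `K`, then there is a compactly
supported locally integrable potential `P` such that the form of `Δ + W + P`
is non-negative on all `C¹` compactly supported functions. -/
theorem stmt_4 (n : ℕ) (hn : 1 ≤ n) (W : EuclideanSpace ℝ (Fin n) → ℝ)
    (hW : LocallyIntegrable W volume)
    (hpos : ∃ K : Set (EuclideanSpace ℝ (Fin n)), IsCompact K ∧
      ∀ ψ : EuclideanSpace ℝ (Fin n) → ℝ, ContDiff ℝ 1 ψ →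
        HasCompactSupport ψ → tsupport ψ ⊆ Kᶜ →
        0 ≤ ∫ x, (‖gradient ψ x‖ ^ 2 + W x * ψ x ^ 2)) :
    ∃ P : EuclideanSpace ℝ (Fin n) → ℝ,
      LocallyIntegrable P volume ∧ HasCompactSupport P ∧
      ∀ ψ : EuclideanSpace ℝ (Fin n) → ℝ, ContDiff ℝ 1 ψ →
        HasCompactSupport ψ →
        0 ≤ ∫ x, (‖gradient ψ x‖ ^ 2 + (W x + P x) * ψ x ^ 2) := by
  obtain ⟨K, hK, hQ⟩ := hpos
  -- thickened compact set and a bump function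
  have hK'c : IsCompact (cthickening 1 K) := hK.cthickening
  obtain ⟨R, hR0, hRK⟩ := hK'c.isBounded.subset_ball_lt 0 0
  set f : ContDiffBump (0 : EuclideanSpace ℝ (Fin n)) := ⟨R, R + 1, hR0, by linarith⟩ with hf
  set u : EuclideanSpace ℝ (Fin n) → ℝ := fun x => Real.sin (π / 2 * f x) with hu_def
  set v : EuclideanSpace ℝ (Fin n) → ℝ := fun x => Real.cos (π / 2 * f x) with hv_def
  have hu : ContDiff ℝ 1 u := Real.contDiff_sin.comp (contDiff_const.mul f.contDiff)
  have hv : ContDiff ℝ 1 v := Real.contDiff_cos.comp (contDiff_const.mul f.contDiff)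
  have huv : ∀ y, u y ^ 2 + v y ^ 2 = 1 := fun y => Real.sin_sq_add_cos_sq _
  set B : Set (EuclideanSpace ℝ (Fin n)) := closedBall 0 (R + 1) with hB_def
  have hBc : IsCompact B := isCompact_closedBall _ _
  have hfB : tsupport (f : EuclideanSpace ℝ (Fin n) → ℝ) ⊆ B := by
    rw [f.tsupport_eq]
  -- behaviour outside B
  have hu0 : ∀ x ∉ B, u =ᶠ[nhds x] (fun _ => (0:ℝ)) := by
    intro x hx
    have hx' : x ∉ tsupport (f : EuclideanSpace ℝ (Fin n) → ℝ) := fun h => hx (hfB h)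
    have hf0 : (f : EuclideanSpace ℝ (Fin n) → ℝ) =ᶠ[nhds x] (fun _ => (0:ℝ)) :=
      notMem_tsupport_iff_eventuallyEq.mp hx'
    filter_upwards [hf0] with y hy
    simp only [hu_def]
    rw [show f y = 0 from hy]
    simp
  have hv1 : ∀ x ∉ B, v =ᶠ[nhds x] (fun _ => (1:ℝ)) := by
    intro x hx
    have hx' : x ∉ tsupport (f : EuclideanSpace ℝ (Fin n) → ℝ) := fun h => hx (hfB h)
    have hf0 : (f : EuclideanSpace ℝ (Fin n) → ℝ) =ᶠ[nhds x] (fun _ => (0:ℝ)) :=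
      notMem_tsupport_iff_eventuallyEq.mp hx'
    filter_upwards [hf0] with y hy
    simp only [hv_def]
    rw [show f y = 0 from hy]
    simp
  have hgu0 : ∀ x ∉ B, gradient u x = 0 := by
    intro x hx; rw [(hu0 x hx).gradient_eq, gradient_fun_const]
  have hgv0 : ∀ x ∉ B, gradient v x = 0 := by
    intro x hx; rw [(hv1 x hx).gradient_eq, gradient_fun_const]
  have huB : ∀ x ∉ B, u x = 0 := by
    intro x hx
    have : f x = 0 := by
      have : x ∉ Function.support (f : EuclideanSpace ℝ (Fin n) → ℝ) :=
        fun h => hx (hfB (subset_tsupport _ h))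
      simpa using this
    simp [hu_def, this]
  -- v vanishes near K
  have hvK : ∀ y ∈ thickening 1 K, v y = 0 := by
    intro y hy
    have hy' : y ∈ closedBall (0 : EuclideanSpace ℝ (Fin n)) R :=
      ball_subset_closedBall (hRK (thickening_subset_cthickening 1 K hy))
    have : f y = 1 := f.one_of_mem_closedBall hy'
    simp [hv_def, this, Real.cos_pi_div_two]
  -- the potential
  set P : EuclideanSpace ℝ (Fin n) → ℝ :=
    fun x => B.indicator (fun y => |W y|) x + (‖gradient u x‖ ^ 2 + ‖gradient v x‖ ^ 2)
    with hP_def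
  have hWabs : LocallyIntegrable (fun y => |W y|) volume := by
    intro x
    obtain ⟨U, hU, h⟩ := hW x
    exact ⟨U, hU, h.abs⟩
  have hPloc : LocallyIntegrable P volume := by
    apply LocallyIntegrable.add
    · exact hWabs.indicator measurableSet_closedBall
    · exact (((grad_cont hu).norm.pow 2).add ((grad_cont hv).norm.pow 2)).locallyIntegrable
  have hPsupp : HasCompactSupport P := by
    apply HasCompactSupport.intro hBc
    intro x hx
    simp [hP_def, indicator_of_notMem hx, hgu0 x hx, hgv0 x hx]
  refine ⟨P, hPloc, hPsupp, ?_⟩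
  intro ψ hψ hψc
  -- the two localized pieces
  have hφ₁ : ContDiff ℝ 1 (fun y => u y * ψ y) := hu.mul hψ
  have hφ₂ : ContDiff ℝ 1 (fun y => v y * ψ y) := hv.mul hψ
  have hφ₁c : HasCompactSupport (fun y => u y * ψ y) := hψc.mul_left
  have hφ₂c : HasCompactSupport (fun y => v y * ψ y) := hψc.mul_left
  have hsupp₂ : tsupport (fun y => v y * ψ y) ⊆ Kᶜ := by
    have h1 : tsupport (fun y => v y * ψ y) ⊆ (thickening 1 K)ᶜ := by
      apply closure_minimal _ isOpen_thickening.isClosed_compl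
      intro y hy hyt
      exact hy (by simp [hvK y hyt])
    exact h1.trans (compl_subset_compl.mpr (self_subset_thickening one_pos K))
  set g₂ : EuclideanSpace ℝ (Fin n) → ℝ :=
    fun x => ‖gradient (fun y => v y * ψ y) x‖ ^ 2 + W x * (v x * ψ x) ^ 2 with hg₂_def
  set g₃ : EuclideanSpace ℝ (Fin n) → ℝ :=
    fun x => ‖gradient (fun y => u y * ψ y) x‖ ^ 2 + W x * (u x * ψ x) ^ 2
      + B.indicator (fun y => |W y|) x * ψ x ^ 2 with hg₃_def
  have hg₂int : Integrable g₂ volume :=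
    (int_gradsq hφ₂ hφ₂c).add (int_Wsq hW (hv.continuous.mul (hψ.continuous)) hφ₂c)
  have hg₃int : Integrable g₃ volume := by
    apply Integrable.add
    · exact (int_gradsq hφ₁ hφ₁c).add (int_Wsq hW (hu.continuous.mul (hψ.continuous)) hφ₁c)
    · have h1 : Integrable (fun x => |W x| * ψ x ^ 2) volume :=
        int_Wsq hWabs hψ.continuous hψc
      have hBmeas : MeasurableSet B := hB_def ▸ measurableSet_closedBall
      have h2 : Integrable (B.indicator fun x => |W x| * ψ x ^ 2) volume :=
        h1.indicator hBmeas
      apply h2.congr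
      apply ae_of_all
      intro x
      by_cases hx : x ∈ B <;> simp [Set.indicator_apply, hx]
  have hg₃nonneg : ∀ x, 0 ≤ g₃ x := by
    intro x
    by_cases hx : x ∈ B
    · rw [hg₃_def]
      simp only [indicator_of_mem hx]
      have t1 : 0 ≤ (|W x| + W x) * (u x ^ 2 * ψ x ^ 2) :=
        mul_nonneg (by nlinarith [neg_abs_le (W x)]) (mul_nonneg (sq_nonneg _) (sq_nonneg _))
      have t2 : 0 ≤ |W x| * (ψ x ^ 2 * (1 - u x ^ 2)) := by
        apply mul_nonneg (abs_nonneg _)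
        apply mul_nonneg (sq_nonneg _)
        nlinarith [Real.sin_sq_le_one (π / 2 * f x)]
      nlinarith [t1, t2, sq_nonneg ‖gradient (fun y => u y * ψ y) x‖]
    · rw [hg₃_def]
      simp only [indicator_of_notMem hx]
      rw [huB x hx]
      simp [sq_nonneg]
  have hpt : ∀ x, ‖gradient ψ x‖ ^ 2 + (W x + P x) * ψ x ^ 2 = g₂ x + g₃ x := by
    intro x
    have hims := ims_pointwise hu hv hψ huv x
    rw [hg₂_def, hg₃_def, hP_def]
    linear_combination -hims - (W x * ψ x ^ 2) * huv x
  calc (0:ℝ) ≤ (∫ x, g₂ x) + ∫ x, g₃ x := by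
        apply add_nonneg
        · exact hQ (fun y => v y * ψ y) hφ₂ hφ₂c hsupp₂
        · exact integral_nonneg hg₃nonneg
    _ = ∫ x, (g₂ x + g₃ x) := (integral_add hg₂int hg₃int).symm
    _ = ∫ x, (‖gradient ψ x‖ ^ 2 + (W x + P x) * ψ x ^ 2) :=
        integral_congr_ae (ae_of_all _ fun x => (hpt x).symm)
end

section
/- Let W : ℝⁿ → ℝ be locally integrable and let φ : ℝⁿ → ℝ be a smooth compactly supported function with 0 ≤ φ ≤ 1. Define the function P : ℝⁿ → ℝ by P = ‖∇φ‖² + Δ(φ(1 − φ/2)) − Wφ² − 2φ(1−φ)W, where Δ = Σᵢ ∂²/∂xᵢ² is the (analyst's) Laplacian. Then P is locally integrable with compact support, and for every C¹ compactly supported function ψ : ℝⁿ → ℝ one has the identity ∫_{ℝⁿ} (‖∇ψ‖² + Wψ² + Pψ²) dx = ∫_{ℝⁿ} (‖∇((1−φ)ψ)‖² + W((1−φ)ψ)²) dx + 2∫_{ℝⁿ} φ(1 − φ/2)‖∇ψ‖² dx. -/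
open MeasureTheory

/-- The (analyst's) Laplacian on Euclidean space: `Δf = Σᵢ ∂²f/∂xᵢ²`. -/
noncomputable def euclideanLaplacian (n : ℕ)
    (f : EuclideanSpace ℝ (Fin n) → ℝ) (x : EuclideanSpace ℝ (Fin n)) : ℝ :=
  ∑ i : Fin n,
    fderiv ℝ (fun y => fderiv ℝ f y (EuclideanSpace.single i 1)) x
      (EuclideanSpace.single i 1)

section Aux

variable {n : ℕ}

lemma aux_norm_sq_eq_sum (y : EuclideanSpace ℝ (Fin n)) : ‖y‖ ^ 2 = ∑ i, y i ^ 2 := by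
  rw [EuclideanSpace.norm_sq_eq]
  simp [Real.norm_eq_abs, sq_abs]

lemma aux_grad_coord (f : EuclideanSpace ℝ (Fin n) → ℝ) (x : EuclideanSpace ℝ (Fin n))
    (i : Fin n) : gradient f x i = fderiv ℝ f x (EuclideanSpace.single i 1) := by
  have h : (inner ℝ (gradient f x) (EuclideanSpace.single i 1) : ℝ)
      = fderiv ℝ f x (EuclideanSpace.single i 1) := InnerProductSpace.toDual_symm_apply
  rw [EuclideanSpace.inner_single_right] at h
  simp only [one_mul, conj_trivial] at h
  exact h

lemma aux_grad_cont {f : EuclideanSpace ℝ (Fin n) → ℝ} (hf : ContDiff ℝ 1 f) :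
    Continuous (gradient f) :=
  (InnerProductSpace.toDual ℝ _).symm.continuous.comp (hf.continuous_fderiv one_ne_zero)

lemma aux_norm_grad_sq_eq_sum {f : EuclideanSpace ℝ (Fin n) → ℝ} (x : EuclideanSpace ℝ (Fin n)) :
    ‖gradient f x‖ ^ 2 = ∑ i, (fderiv ℝ f x (EuclideanSpace.single i 1)) ^ 2 := by
  rw [aux_norm_sq_eq_sum]
  exact Finset.sum_congr rfl fun i _ => by rw [aux_grad_coord]

lemma aux_fderiv_u {φ ψ : EuclideanSpace ℝ (Fin n) → ℝ} (hφ : Differentiable ℝ φ)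
    (hψ : Differentiable ℝ ψ) (x v : EuclideanSpace ℝ (Fin n)) :
    fderiv ℝ (fun y => (1 - φ y) * ψ y) x v
      = (1 - φ x) * fderiv ℝ ψ x v - ψ x * fderiv ℝ φ x v := by
  rw [fderiv_fun_mul ((hφ x).const_sub 1) (hψ x)]
  simp [fderiv_const_sub (f := φ) (1 : ℝ)]
  ring

lemma aux_fderiv_g {φ : EuclideanSpace ℝ (Fin n) → ℝ} (hφ : Differentiable ℝ φ)
    (x v : EuclideanSpace ℝ (Fin n)) :
    fderiv ℝ (fun y => φ y * (1 - φ y / 2)) x v = (1 - φ x) * fderiv ℝ φ x v := by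
  have e2 : fderiv ℝ (fun y => 1 - φ y / 2) x = -((2:ℝ)⁻¹ • fderiv ℝ φ x) := by
    rw [fderiv_const_sub]
    congr 1
    simp_rw [div_eq_mul_inv]
    rw [fderiv_mul_const (hφ x)]
  rw [fderiv_fun_mul (hφ x) (by fun_prop : DifferentiableAt ℝ (fun y => 1 - φ y / 2) x), e2]
  simp
  ring

lemma aux_fderiv_q {ψ : EuclideanSpace ℝ (Fin n) → ℝ} (hψ : Differentiable ℝ ψ)
    (x v : EuclideanSpace ℝ (Fin n)) :
    fderiv ℝ (fun y => ψ y * ψ y) x v = 2 * ψ x * fderiv ℝ ψ x v := by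
  rw [fderiv_fun_mul (hψ x) (hψ x)]
  simp
  ring

/-- The key pointwise identity. -/
lemma aux_pointwise {φ ψ W : EuclideanSpace ℝ (Fin n) → ℝ} (hφ : Differentiable ℝ φ)
    (hψ : Differentiable ℝ ψ) (x : EuclideanSpace ℝ (Fin n)) :
    ‖gradient ψ x‖ ^ 2 + W x * ψ x ^ 2
        + (‖gradient φ x‖ ^ 2
            + euclideanLaplacian n (fun y => φ y * (1 - φ y / 2)) x
            - W x * φ x ^ 2 - 2 * φ x * (1 - φ x) * W x) * ψ x ^ 2
      = (‖gradient (fun y => (1 - φ y) * ψ y) x‖ ^ 2 + W x * ((1 - φ x) * ψ x) ^ 2)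
        + 2 * (φ x * (1 - φ x / 2) * ‖gradient ψ x‖ ^ 2)
        + ∑ i, (ψ x * ψ x
              * fderiv ℝ (fun y => fderiv ℝ (fun z => φ z * (1 - φ z / 2)) y
                  (EuclideanSpace.single i 1)) x (EuclideanSpace.single i 1)
            + fderiv ℝ (fun y => ψ y * ψ y) x (EuclideanSpace.single i 1)
              * fderiv ℝ (fun z => φ z * (1 - φ z / 2)) x (EuclideanSpace.single i 1)) := by
  set s := φ x with hs
  set p := ψ x with hp
  set w := W x with hw
  set L := euclideanLaplacian n (fun y => φ y * (1 - φ y / 2)) x with hL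
  set a : Fin n → ℝ := fun i => fderiv ℝ φ x (EuclideanSpace.single i 1) with ha
  set b : Fin n → ℝ := fun i => fderiv ℝ ψ x (EuclideanSpace.single i 1) with hb
  have hLsum : L = ∑ i, fderiv ℝ (fun y => fderiv ℝ (fun z => φ z * (1 - φ z / 2)) y
      (EuclideanSpace.single i 1)) x (EuclideanSpace.single i 1) := rfl
  -- rewrite the three squared gradient norms as coordinate sums
  rw [aux_norm_grad_sq_eq_sum (f := ψ) x, aux_norm_grad_sq_eq_sum (f := φ) x,
    aux_norm_grad_sq_eq_sum (f := fun y => (1 - φ y) * ψ y) x]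
  -- rewrite the derivative entries
  have e1 : ∀ i : Fin n, fderiv ℝ (fun y => (1 - φ y) * ψ y) x (EuclideanSpace.single i 1)
      = (1 - s) * b i - p * a i := fun i => aux_fderiv_u hφ hψ x _
  have e2 : ∀ i : Fin n, fderiv ℝ (fun y => ψ y * ψ y) x (EuclideanSpace.single i 1)
      = 2 * p * b i := fun i => aux_fderiv_q hψ x _
  have e3 : ∀ i : Fin n, fderiv ℝ (fun z => φ z * (1 - φ z / 2)) x (EuclideanSpace.single i 1)
      = (1 - s) * a i := fun i => aux_fderiv_g hφ x _
  simp only [e1, e2, e3]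
  rw [Finset.sum_add_distrib, ← Finset.mul_sum, ← hLsum]
  set S1 := ∑ i, (b i) ^ 2 with hS1
  set S2 := ∑ i, (a i) ^ 2 with hS2
  have eU : ∑ i, ((1 - s) * b i - p * a i) ^ 2
      = (1-s)^2 * S1 - 2*(1-s)*p * (∑ i, a i * b i) + p^2 * S2 := by
    rw [hS1, hS2, Finset.mul_sum, Finset.mul_sum, Finset.mul_sum, ← Finset.sum_sub_distrib,
      ← Finset.sum_add_distrib]
    exact Finset.sum_congr rfl fun i _ => by ring
  have eT : ∑ i, (2 * p * b i * ((1 - s) * a i)) = 2*p*(1-s) * (∑ i, a i * b i) := by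
    rw [Finset.mul_sum]
    exact Finset.sum_congr rfl fun i _ => by ring
  rw [eU, eT]
  ring

end Aux

/-- The localization identity (E-fip-1)/(E-fip-2) of Proposition 4.1: with
`P = ‖∇φ‖² + Δ(φ(1 - φ/2)) - Wφ² - 2φ(1-φ)W`, the function `P` is locally
integrable with compact support, and for every `C¹` compactly supported `ψ`,
`∫ (‖∇ψ‖² + Wψ² + Pψ²) = ∫ (‖∇((1-φ)ψ)‖² + W((1-φ)ψ)²) + 2∫ φ(1-φ/2)‖∇ψ‖²`. -/
theorem stmt_5 (n : ℕ) (W : EuclideanSpace ℝ (Fin n) → ℝ)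
    (hW : LocallyIntegrable W volume)
    (φ : EuclideanSpace ℝ (Fin n) → ℝ) (hφ : ContDiff ℝ (⊤ : ℕ∞) φ)
    (hφc : HasCompactSupport φ) (hφ01 : ∀ x, φ x ∈ Set.Icc (0 : ℝ) 1)
    (P : EuclideanSpace ℝ (Fin n) → ℝ)
    (hP : P = fun x => ‖gradient φ x‖ ^ 2
        + euclideanLaplacian n (fun y => φ y * (1 - φ y / 2)) x
        - W x * φ x ^ 2 - 2 * φ x * (1 - φ x) * W x) :
    LocallyIntegrable P volume ∧ HasCompactSupport P ∧
      ∀ ψ : EuclideanSpace ℝ (Fin n) → ℝ, ContDiff ℝ 1 ψ →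
        HasCompactSupport ψ →
        ∫ x, (‖gradient ψ x‖ ^ 2 + W x * ψ x ^ 2 + P x * ψ x ^ 2)
          = (∫ x, (‖gradient (fun y => (1 - φ y) * ψ y) x‖ ^ 2
              + W x * ((1 - φ x) * ψ x) ^ 2))
            + 2 * ∫ x, φ x * (1 - φ x / 2) * ‖gradient ψ x‖ ^ 2 := by
  have hφd : Differentiable ℝ φ := hφ.differentiable (by simp)
  set g : EuclideanSpace ℝ (Fin n) → ℝ := fun y => φ y * (1 - φ y / 2) with hg_def
  have hgsm : ContDiff ℝ (⊤ : ℕ∞) g := hφ.mul (contDiff_const.sub (hφ.div_const 2))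
  have hgc : HasCompactSupport g := hφc.mul_right
  -- smoothness of the first partial derivatives of g
  have hhsm : ∀ i : Fin n, ContDiff ℝ (⊤ : ℕ∞)
      (fun y => fderiv ℝ g y (EuclideanSpace.single i 1)) :=
    fun i => (hgsm.fderiv_right (by simp)).clm_apply contDiff_const
  have hhc : ∀ i : Fin n, HasCompactSupport
      (fun y => fderiv ℝ g y (EuclideanSpace.single i 1)) :=
    fun i => HasCompactSupport.comp_left
      (g := fun L : EuclideanSpace ℝ (Fin n) →L[ℝ] ℝ => L (EuclideanSpace.single i 1))
      (hgc.fderiv ℝ) rfl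
  -- vanishing of the ingredients of `P` off the support of `φ`
  have hUopen : IsOpen (tsupport φ)ᶜ := (isClosed_tsupport φ).isOpen_compl
  have hgrad0 : ∀ x ∉ tsupport φ, gradient φ x = 0 := by
    intro x hx
    have h0 : φ =ᶠ[nhds x] 0 := notMem_tsupport_iff_eventuallyEq.mp hx
    rw [h0.gradient_eq]
    exact gradient_const _ _
  have hdgU : ∀ y ∈ (tsupport φ)ᶜ, fderiv ℝ g y = 0 := by
    intro y hy
    have h0 : g =ᶠ[nhds y] (fun _ => (0:ℝ)) := by
      filter_upwards [hUopen.mem_nhds hy] with z hz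
      simp [hg_def, image_eq_zero_of_notMem_tsupport hz]
    rw [h0.fderiv_eq]
    exact fderiv_const_apply 0
  have hlap0 : ∀ x ∉ tsupport φ, euclideanLaplacian n g x = 0 := by
    intro x hx
    apply Finset.sum_eq_zero
    intro i _
    have h0 : (fun y => fderiv ℝ g y (EuclideanSpace.single i 1)) =ᶠ[nhds x]
        (fun _ => (0:ℝ)) := by
      filter_upwards [hUopen.mem_nhds hx] with z hz
      rw [hdgU z hz]
      rfl
    rw [h0.fderiv_eq, fderiv_const_apply]
    rfl
  have hP0 : ∀ x ∉ tsupport φ, P x = 0 := by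
    intro x hx
    rw [hP]
    simp [hgrad0 x hx, hlap0 x hx, image_eq_zero_of_notMem_tsupport hx]
  have hPc : HasCompactSupport P := HasCompactSupport.intro hφc hP0
  -- Integrability of P
  have hlapcont : Continuous (euclideanLaplacian n g) := by
    apply continuous_finset_sum
    intro i _
    exact ((hhsm i).continuous_fderiv (by simp)).clm_apply continuous_const
  have hF1 : Integrable (fun x => ‖gradient φ x‖ ^ 2 + euclideanLaplacian n g x) volume := by
    apply Continuous.integrable_of_hasCompactSupport
    · exact ((aux_grad_cont (hφ.of_le (by simp))).norm.pow 2).add hlapcont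
    · exact HasCompactSupport.intro hφc fun x hx => by
        simp [hgrad0 x hx, hlap0 x hx]
  have hF2 : Integrable (fun x => W x * φ x ^ 2) volume := by
    have h1 : HasCompactSupport (fun x => φ x ^ 2) :=
      HasCompactSupport.comp_left (g := fun t : ℝ => t ^ 2) hφc (by simp)
    have := hW.integrable_smul_left_of_hasCompactSupport (hφ.continuous.pow 2) h1
    simpa [smul_eq_mul, mul_comm] using this
  have hF3 : Integrable (fun x => 2 * φ x * (1 - φ x) * W x) volume := by
    have h1 : HasCompactSupport (fun x => 2 * φ x * (1 - φ x)) :=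
      HasCompactSupport.intro hφc fun x hx => by
        simp [image_eq_zero_of_notMem_tsupport hx]
    have h2 : Continuous (fun x => 2 * φ x * (1 - φ x)) := by fun_prop
    have := hW.integrable_smul_left_of_hasCompactSupport h2 h1
    simpa [smul_eq_mul] using this
  have hPint : Integrable P volume := by
    rw [hP]
    exact (hF1.sub hF2).sub hF3
  refine ⟨hPint.locallyIntegrable, hPc, ?_⟩
  -- The main identity
  intro ψ hψ hψc
  have hψd : Differentiable ℝ ψ := hψ.differentiable one_ne_zero
  have hq : ContDiff ℝ 1 (fun y => ψ y * ψ y) := hψ.mul hψ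
  have hqc : HasCompactSupport (fun y => ψ y * ψ y) := hψc.mul_left
  have hu : ContDiff ℝ 1 (fun y => (1 - φ y) * ψ y) :=
    (contDiff_const.sub (hφ.of_le (by simp))).mul hψ
  have huc : HasCompactSupport (fun y => (1 - φ y) * ψ y) := hψc.mul_left
  -- integrability of the pieces
  have hgradψ : Continuous (gradient ψ) := aux_grad_cont hψ
  have hgradψc : HasCompactSupport (gradient ψ) :=
    (hψc.fderiv ℝ).comp_left (map_zero _)
  have hInt1 : ∀ i : Fin n, Integrable (fun x => ψ x * ψ x
      * fderiv ℝ (fun y => fderiv ℝ g y (EuclideanSpace.single i 1)) x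
        (EuclideanSpace.single i 1)) volume := by
    intro i
    apply Continuous.integrable_of_hasCompactSupport
    · exact (hq.continuous).mul
        (((hhsm i).continuous_fderiv (by simp)).clm_apply continuous_const)
    · exact hqc.mul_right
  have hInt2 : ∀ i : Fin n, Integrable (fun x =>
      fderiv ℝ (fun y => ψ y * ψ y) x (EuclideanSpace.single i 1)
        * fderiv ℝ g x (EuclideanSpace.single i 1)) volume := by
    intro i
    apply Continuous.integrable_of_hasCompactSupport
    · exact ((hq.continuous_fderiv one_ne_zero).clm_apply continuous_const).mul
        ((hhsm i).continuous)
    · exact (HasCompactSupport.comp_left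
        (g := fun L : EuclideanSpace ℝ (Fin n) →L[ℝ] ℝ => L (EuclideanSpace.single i 1))
        (hqc.fderiv ℝ) rfl).mul_right
  have hInt3 : ∀ i : Fin n, Integrable (fun x => ψ x * ψ x
      * fderiv ℝ g x (EuclideanSpace.single i 1)) volume := by
    intro i
    apply Continuous.integrable_of_hasCompactSupport
    · exact (hq.continuous).mul ((hhsm i).continuous)
    · exact hqc.mul_right
  -- integration by parts: each divergence term integrates to zero
  have ibp : ∀ i : Fin n,
      ∫ x, ψ x * ψ x * fderiv ℝ (fun y => fderiv ℝ g y (EuclideanSpace.single i 1)) x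
          (EuclideanSpace.single i 1)
        = - ∫ x, fderiv ℝ (fun y => ψ y * ψ y) x (EuclideanSpace.single i 1)
            * fderiv ℝ g x (EuclideanSpace.single i 1) := by
    intro i
    exact integral_mul_fderiv_eq_neg_fderiv_mul_of_integrable (hInt2 i) (hInt1 i) (hInt3 i)
      (fun x _ => (hψd x).mul (hψd x)) (fun x _ => (hhsm i).differentiable (by simp) x)
  set T : EuclideanSpace ℝ (Fin n) → ℝ := fun x =>
    ∑ i, (ψ x * ψ x
        * fderiv ℝ (fun y => fderiv ℝ g y (EuclideanSpace.single i 1)) x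
            (EuclideanSpace.single i 1)
      + fderiv ℝ (fun y => ψ y * ψ y) x (EuclideanSpace.single i 1)
        * fderiv ℝ g x (EuclideanSpace.single i 1)) with hT_def
  have hInt12 : ∀ i : Fin n, Integrable (fun x => ψ x * ψ x
      * fderiv ℝ (fun y => fderiv ℝ g y (EuclideanSpace.single i 1)) x
          (EuclideanSpace.single i 1)
      + fderiv ℝ (fun y => ψ y * ψ y) x (EuclideanSpace.single i 1)
        * fderiv ℝ g x (EuclideanSpace.single i 1)) volume :=
    fun i => (hInt1 i).add (hInt2 i)
  have hTint : Integrable T volume :=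
    integrable_finset_sum _ fun i _ => hInt12 i
  have hTzero : ∫ x, T x = 0 := by
    rw [hT_def, integral_finset_sum _ fun i _ => hInt12 i]
    refine Finset.sum_eq_zero fun i _ => ?_
    rw [integral_add (hInt1 i) (hInt2 i), ibp i]
    exact neg_add_cancel _
  -- integrability of the two right-hand side integrands
  have hBint : Integrable (fun x => ‖gradient (fun y => (1 - φ y) * ψ y) x‖ ^ 2
      + W x * ((1 - φ x) * ψ x) ^ 2) volume := by
    apply Integrable.add
    · apply Continuous.integrable_of_hasCompactSupport
      · exact (aux_grad_cont hu).norm.pow 2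
      · exact HasCompactSupport.comp_left (g := fun v : EuclideanSpace ℝ (Fin n) => ‖v‖ ^ 2)
          ((huc.fderiv ℝ).comp_left (map_zero _)) (by simp)
    · have h1 : HasCompactSupport (fun x => ((1 - φ x) * ψ x) ^ 2) :=
        HasCompactSupport.comp_left (g := fun t : ℝ => t ^ 2) huc (by simp)
      have := hW.integrable_smul_left_of_hasCompactSupport (hu.continuous.pow 2) h1
      simpa [smul_eq_mul, mul_comm] using this
  have hCint : Integrable (fun x => φ x * (1 - φ x / 2) * ‖gradient ψ x‖ ^ 2) volume := by
    apply Continuous.integrable_of_hasCompactSupport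
    · exact (hφ.continuous.mul (by fun_prop)).mul (hgradψ.norm.pow 2)
    · exact HasCompactSupport.intro hφc fun x hx => by
        simp [image_eq_zero_of_notMem_tsupport hx]
  have h2Cint : Integrable (fun x => 2 * (φ x * (1 - φ x / 2) * ‖gradient ψ x‖ ^ 2)) volume :=
    hCint.const_mul 2
  -- the pointwise identity
  have keyPt : ∀ x, ‖gradient ψ x‖ ^ 2 + W x * ψ x ^ 2 + P x * ψ x ^ 2
      = (‖gradient (fun y => (1 - φ y) * ψ y) x‖ ^ 2 + W x * ((1 - φ x) * ψ x) ^ 2)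
        + 2 * (φ x * (1 - φ x / 2) * ‖gradient ψ x‖ ^ 2) + T x := by
    intro x
    rw [hP]
    exact aux_pointwise hφd hψd x
  calc ∫ x, (‖gradient ψ x‖ ^ 2 + W x * ψ x ^ 2 + P x * ψ x ^ 2)
      = ∫ x, ((‖gradient (fun y => (1 - φ y) * ψ y) x‖ ^ 2 + W x * ((1 - φ x) * ψ x) ^ 2)
          + 2 * (φ x * (1 - φ x / 2) * ‖gradient ψ x‖ ^ 2) + T x) := by
        exact integral_congr_ae (Filter.Eventually.of_forall keyPt)
    _ = (∫ x, (‖gradient (fun y => (1 - φ y) * ψ y) x‖ ^ 2 + W x * ((1 - φ x) * ψ x) ^ 2))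
          + (∫ x, 2 * (φ x * (1 - φ x / 2) * ‖gradient ψ x‖ ^ 2)) + ∫ x, T x := by
        have hB2C : Integrable (fun x =>
            (‖gradient (fun y => (1 - φ y) * ψ y) x‖ ^ 2 + W x * ((1 - φ x) * ψ x) ^ 2)
              + 2 * (φ x * (1 - φ x / 2) * ‖gradient ψ x‖ ^ 2)) volume := hBint.add h2Cint
        rw [integral_add hB2C hTint, integral_add hBint h2Cint]
    _ = (∫ x, (‖gradient (fun y => (1 - φ y) * ψ y) x‖ ^ 2 + W x * ((1 - φ x) * ψ x) ^ 2))
          + 2 * ∫ x, φ x * (1 - φ x / 2) * ‖gradient ψ x‖ ^ 2 := by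
        rw [hTzero, integral_const_mul]
        ring
end

section
/- Let 0 ≤ a < b and c₀ ∈ ℝ. Let G : [a,b] → ℝ be a C¹ function and L : [a,b] → ℝ a continuous function satisfying the integrated Fiala inequality: for all a ≤ c ≤ d ≤ b, L(d) − L(c) ≤ 2π c₀ (d − c) − ∫_c^d G(s) ds. Let ξ : [a,b] → ℝ be a C² function with ξ ≥ 0, ξ' ≤ 0 and ξ'' ≥ 0 on [a,b]. Then ∫_a^b ξ(t)² G'(t) dt ≤ [ξ²G]_a^b − 2π c₀ [ξ²]_a^b + [(ξ²)'L]_a^b − ∫_a^b (ξ²)''(t) L(t) dt, where [f]_a^b denotes f(b) − f(a). -/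
open Real Set intervalIntegral MeasureTheory

/-- Lemma 2.2 (one-dimensional content): if `L` satisfies the integrated Fiala
inequality `L(d) - L(c) ≤ 2πc₀(d-c) - ∫_c^d G` on `[a,b]`, and `ξ` is `C²`,
nonnegative, nonincreasing and convex on `[a,b]`, then
`∫_a^b ξ²G' ≤ [ξ²G]_a^b - 2πc₀[ξ²]_a^b + [(ξ²)'L]_a^b - ∫_a^b (ξ²)'' L`. -/
theorem stmt_8 (a b c₀ : ℝ) (ha : 0 ≤ a) (hab : a < b)
    (G G' L : ℝ → ℝ)
    (hG : ∀ t ∈ Icc a b, HasDerivAt G (G' t) t)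
    (hG'c : ContinuousOn G' (Icc a b))
    (hLc : ContinuousOn L (Icc a b))
    (hFiala : ∀ c d : ℝ, a ≤ c → c ≤ d → d ≤ b →
      L d - L c ≤ 2 * π * c₀ * (d - c) - ∫ s in c..d, G s)
    (ξ ξ' ξ'' : ℝ → ℝ)
    (hξ : ∀ t ∈ Icc a b, HasDerivAt ξ (ξ' t) t)
    (hξd : ∀ t ∈ Icc a b, HasDerivAt ξ' (ξ'' t) t)
    (hξ''c : ContinuousOn ξ'' (Icc a b))
    (hsign : ∀ t ∈ Icc a b, 0 ≤ ξ t ∧ ξ' t ≤ 0 ∧ 0 ≤ ξ'' t) :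
    ∫ t in a..b, ξ t ^ 2 * G' t ≤
      (ξ b ^ 2 * G b - ξ a ^ 2 * G a) - 2 * π * c₀ * (ξ b ^ 2 - ξ a ^ 2)
        + (2 * ξ b * ξ' b * L b - 2 * ξ a * ξ' a * L a)
        - ∫ t in a..b, (2 * ξ t * ξ'' t + 2 * ξ' t ^ 2) * L t := by
  have hle : a ≤ b := hab.le
  have huI : uIcc a b = Icc a b := uIcc_of_le hle
  -- continuity facts
  have hGc : ContinuousOn G (Icc a b) := fun t ht => (hG t ht).continuousAt.continuousWithinAt
  have hξc : ContinuousOn ξ (Icc a b) := fun t ht => (hξ t ht).continuousAt.continuousWithinAt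
  have hξ'c : ContinuousOn ξ' (Icc a b) := fun t ht => (hξd t ht).continuousAt.continuousWithinAt
  -- abbreviations
  set dsq : ℝ → ℝ := fun t => 2 * ξ t * ξ' t with hdsq_def
  set ddsq : ℝ → ℝ := fun t => 2 * ξ t * ξ'' t + 2 * ξ' t ^ 2 with hddsq_def
  have hsq : ∀ t ∈ uIcc a b, HasDerivAt (fun t => ξ t ^ 2) (dsq t) t := by
    intro t ht
    rw [huI] at ht
    have := ((hξ t ht).fun_mul (hξ t ht))
    have h2 : HasDerivAt (fun t => ξ t ^ 2) (ξ' t * ξ t + ξ t * ξ' t) t := by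
      simpa [pow_two] using this
    convert h2 using 1; simp [hdsq_def]; ring
  have hdsq : ∀ t ∈ uIcc a b, HasDerivAt dsq (ddsq t) t := by
    intro t ht
    rw [huI] at ht
    have : HasDerivAt (fun i => 2 * ξ i * ξ' i) (2 * ξ' t * ξ' t + 2 * ξ t * ξ'' t) t :=
      (((hξ t ht).const_mul 2).fun_mul (hξd t ht))
    convert this using 1; simp [hddsq_def]; ring
  have hdsqc : ContinuousOn dsq (Icc a b) := (continuousOn_const.mul hξc).mul hξ'c
  have hddsqc : ContinuousOn ddsq (Icc a b) :=
    ((continuousOn_const.mul hξc).mul hξ''c).add (continuousOn_const.mul (hξ'c.pow 2))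
  have hsqc : ContinuousOn (fun t => ξ t ^ 2) (Icc a b) := hξc.pow 2
  -- extended G
  set Gt : ℝ → ℝ := fun t => G (max a (min b t)) with hGt_def
  have hGtc : Continuous Gt := by
    apply hGc.comp_continuous
    · exact continuous_const.max (continuous_const.min continuous_id)
    · intro x; constructor
      · exact le_max_left _ _
      · exact max_le hle (min_le_left _ _)
  have hGteq : ∀ t ∈ Icc a b, Gt t = G t := by
    intro t ht
    show G (a ⊔ b ⊓ t) = G t
    rw [min_eq_right ht.2, max_eq_right ht.1]
  set Φ : ℝ → ℝ := fun t => ∫ s in a..t, Gt s with hΦ_def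
  have hΦd : ∀ t ∈ uIcc a b, HasDerivAt Φ (Gt t) t := fun t _ =>
    (hGtc.integral_hasStrictDerivAt a t).hasDerivAt
  have hΦc : ContinuousOn Φ (Icc a b) := fun t ht =>
    (hΦd t (by rw [huI]; exact ht)).continuousAt.continuousWithinAt
  -- Ψ
  set Ψ : ℝ → ℝ := fun t => 2 * π * c₀ * (t - a) - (L t - L a) with hΨ_def
  have hΨc : ContinuousOn Ψ (Icc a b) :=
    (continuousOn_const.mul (continuousOn_id.sub continuousOn_const)).sub
      (hLc.sub continuousOn_const)
  have hΦΨ : ∀ t ∈ Icc a b, Φ t ≤ Ψ t := by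
    intro t ht
    have h1 : Φ t = ∫ s in a..t, G s := by
      apply intervalIntegral.integral_congr
      intro s hs
      rw [uIcc_of_le ht.1] at hs
      exact hGteq s ⟨hs.1, hs.2.trans ht.2⟩
    have := hFiala a t le_rfl ht.1 ht.2
    simp only [hΨ_def]
    linarith [this, h1.ge, h1.le]
  -- integrability
  have hint : ∀ (f : ℝ → ℝ), ContinuousOn f (Icc a b) → IntervalIntegrable f volume a b := by
    intro f hf
    exact (hf.mono (by rw [huI])).intervalIntegrable
  -- IBP 1
  have h1 : ∫ t in a..b, ξ t ^ 2 * G' t =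
      ξ b ^ 2 * G b - ξ a ^ 2 * G a - ∫ t in a..b, dsq t * G t := by
    apply integral_mul_deriv_eq_deriv_mul hsq (fun t ht => hG t (huI ▸ ht))
      (hint _ hdsqc) (hint _ hG'c)
  -- IBP 2
  have h2 : ∫ t in a..b, dsq t * G t = dsq b * Φ b - ∫ t in a..b, ddsq t * Φ t := by
    have e1 : ∫ t in a..b, dsq t * G t = ∫ t in a..b, dsq t * Gt t := by
      apply intervalIntegral.integral_congr
      intro s hs
      rw [huI] at hs
      show dsq s * G s = dsq s * Gt s
      rw [hGteq s hs]
    have e2 := integral_mul_deriv_eq_deriv_mul hdsq hΦd (hint _ hddsqc)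
      (hGtc.continuousOn.intervalIntegrable)
    have hΦa : Φ a = 0 := by simp [hΦ_def]
    rw [e1, e2, hΦa]; ring
  -- FTC for dsq
  have hftc : ∫ t in a..b, ddsq t = dsq b - dsq a :=
    intervalIntegral.integral_eq_sub_of_hasDerivAt hdsq (hint _ hddsqc)
  -- IBP 3: ∫ (s-a) ddsq = (b-a) dsq b - ∫ dsq
  have hftc2 : ∫ t in a..b, dsq t = ξ b ^ 2 - ξ a ^ 2 :=
    intervalIntegral.integral_eq_sub_of_hasDerivAt hsq (hint _ hdsqc)
  have h3 : ∫ t in a..b, (t - a) * ddsq t = (b - a) * dsq b - (ξ b ^ 2 - ξ a ^ 2) := by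
    have hlin : ∀ t ∈ uIcc a b, HasDerivAt (fun s => s - a) (1:ℝ) t := fun t _ => by
      simpa using (hasDerivAt_id t).sub_const a
    have e := intervalIntegral.integral_mul_deriv_eq_deriv_mul hlin hdsq
      intervalIntegrable_const (hint _ hddsqc)
    simp only [sub_self, zero_mul, one_mul] at e
    rw [e, hftc2]; ring
  -- split ∫ ddsq * L
  have hLsplit : ∀ t, L t = L a + 2 * π * c₀ * (t - a) - Ψ t := by
    intro t; simp [hΨ_def]; ring
  have h4 : ∫ t in a..b, ddsq t * L t =
      L a * (dsq b - dsq a) + 2 * π * c₀ * ((b - a) * dsq b - (ξ b ^ 2 - ξ a ^ 2))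
        - ∫ t in a..b, ddsq t * Ψ t := by
    have e1 : ∀ t ∈ uIcc a b, ddsq t * L t =
        L a * ddsq t + 2 * π * c₀ * ((t - a) * ddsq t) - ddsq t * Ψ t := by
      intro t _; rw [hLsplit t]; ring
    have i1 : IntervalIntegrable (fun t => L a * ddsq t) volume a b := (hint _ hddsqc).const_mul _
    have i2 : IntervalIntegrable (fun t => 2 * π * c₀ * ((t - a) * ddsq t)) volume a b :=
      (hint _ ((continuousOn_id.sub continuousOn_const).mul hddsqc)).const_mul _
    have i3 : IntervalIntegrable (fun t => ddsq t * Ψ t) volume a b := hint _ (hddsqc.mul hΨc)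
    rw [intervalIntegral.integral_congr e1, intervalIntegral.integral_sub (i1.add i2) i3,
      intervalIntegral.integral_add i1 i2, intervalIntegral.integral_const_mul,
      intervalIntegral.integral_const_mul, hftc, h3]
  -- comparisons
  have hdsqb_nonpos : dsq b ≤ 0 := by
    obtain ⟨h1', h2', _⟩ := hsign b (right_mem_Icc.mpr hle)
    have : 2 * ξ b * ξ' b ≤ 0 := mul_nonpos_of_nonneg_of_nonpos (by linarith) h2'
    simpa [hdsq_def] using this
  have h5 : dsq b * Ψ b ≤ dsq b * Φ b :=
    mul_le_mul_of_nonpos_left (hΦΨ b (right_mem_Icc.mpr hle)) hdsqb_nonpos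
  have h6 : ∫ t in a..b, ddsq t * Φ t ≤ ∫ t in a..b, ddsq t * Ψ t := by
    apply intervalIntegral.integral_mono_on hle (hint _ (hddsqc.mul hΦc))
      (hint _ (hddsqc.mul hΨc))
    intro t ht
    have hnn := (hsign t ht).2.2
    obtain ⟨hs1, hs2, hs3⟩ := hsign t ht
    have hdd : 0 ≤ ddsq t := by
      have : 0 ≤ 2 * ξ t * ξ'' t := by positivity
      have : 0 ≤ 2 * ξ' t ^ 2 := by positivity
      simp only [hddsq_def]; positivity
    exact mul_le_mul_of_nonneg_left (hΦΨ t ht) hdd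
  -- finish
  have hdb : (2:ℝ) * ξ b * ξ' b = dsq b := rfl
  have hda : (2:ℝ) * ξ a * ξ' a = dsq a := rfl
  have hgi : ∀ t, (2 * ξ t * ξ'' t + 2 * ξ' t ^ 2) * L t = ddsq t * L t := fun t => rfl
  simp only [hgi]
  rw [h1, h2, h4, hLsplit b, hdb, hda]
  have hexp : dsq b * (L a + 2 * π * c₀ * (b - a) - Ψ b) =
      dsq b * L a + dsq b * (2 * π * c₀ * (b - a)) - dsq b * Ψ b := by ring
  nlinarith [h5, h6, hexp]
end

section
/- Let Q > 0, let N be a natural number, let 0 = t₀ < t₁ < ⋯ < t_N < t_{N+1} = Q be real numbers, and let ω₁, …, ω_N be non-negative real numbers; set χ_n = 1 − (ω₁ + ⋯ + ω_n) for 0 ≤ n ≤ N (so χ₀ = 1). Let G : [0,Q] → ℝ be C¹ with G(0) = 0, and let L : [0,Q] → ℝ be continuous with L(0) = 0, satisfying, for each n ∈ {0, …, N} and all t_n ≤ c ≤ d ≤ t_{n+1}, the inequality L(d) − L(c) ≤ 2π χ_n (d − c) − ∫_c^d G(s) ds. Let ξ : [0,Q] → ℝ be a C² function with ξ ≥ 0,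 ξ' ≤ 0, ξ'' ≥ 0 on [0,Q], and ξ(Q) = 0. Then ∫_0^Q ξ(t)² G'(t) dt ≤ 2π (ξ(0)² − Σ_{n=1}^{N} ω_n ξ(t_n)²) − ∫_0^Q (ξ²)''(t) L(t) dt. -/
open Real Set

/-- Inequality (E-T0) of Lemma 2.3 (one-dimensional content): with a partition
`0 = p₀ < p₁ < ⋯ < p_{N+1} = Q`, jumps `ωₙ ≥ 0`, `χₙ = 1 - (ω₁ + ⋯ + ωₙ)`,
`G(0) = L(0) = 0`, the integrated Fiala inequality with constant `χₙ` on each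
`[pₙ, pₙ₊₁]`, and `ξ` a `C²` nonnegative, nonincreasing, convex function on
`[0,Q]` with `ξ(Q) = 0`, one has
`∫_0^Q ξ²G' ≤ 2π(ξ(0)² - Σₙ ωₙ ξ(pₙ)²) - ∫_0^Q (ξ²)'' L`. -/
theorem stmt_9 (Q : ℝ) (hQ : 0 < Q) (N : ℕ) (p : ℕ → ℝ) (ω : ℕ → ℝ)
    (hp0 : p 0 = 0) (hpN : p (N + 1) = Q)
    (hpmono : ∀ n ≤ N, p n < p (n + 1))
    (hω : ∀ n, 1 ≤ n → n ≤ N → 0 ≤ ω n)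
    (χ : ℕ → ℝ) (hχ : ∀ n, χ n = 1 - ∑ i ∈ Finset.Icc 1 n, ω i)
    (G G' L : ℝ → ℝ) (hG0 : G 0 = 0) (hL0 : L 0 = 0)
    (hG : ∀ t ∈ Icc (0 : ℝ) Q, HasDerivAt G (G' t) t)
    (hG'c : ContinuousOn G' (Icc 0 Q))
    (hLc : ContinuousOn L (Icc 0 Q))
    (hFiala : ∀ n ≤ N, ∀ c d : ℝ, p n ≤ c → c ≤ d → d ≤ p (n + 1) →
      L d - L c ≤ 2 * π * χ n * (d - c) - ∫ s in c..d, G s)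
    (ξ ξ' ξ'' : ℝ → ℝ)
    (hξ : ∀ t ∈ Icc (0 : ℝ) Q, HasDerivAt ξ (ξ' t) t)
    (hξd : ∀ t ∈ Icc (0 : ℝ) Q, HasDerivAt ξ' (ξ'' t) t)
    (hξ''c : ContinuousOn ξ'' (Icc 0 Q))
    (hsign : ∀ t ∈ Icc (0 : ℝ) Q, 0 ≤ ξ t ∧ ξ' t ≤ 0 ∧ 0 ≤ ξ'' t)
    (hξQ : ξ Q = 0) :
    ∫ t in (0 : ℝ)..Q, ξ t ^ 2 * G' t ≤
      2 * π * (ξ 0 ^ 2 - ∑ n ∈ Finset.Icc 1 N, ω n * ξ (p n) ^ 2)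
        - ∫ t in (0 : ℝ)..Q, (2 * ξ t * ξ'' t + 2 * ξ' t ^ 2) * L t := by
  have hQle : (0 : ℝ) ≤ Q := hQ.le
  have hIcc : uIcc (0 : ℝ) Q = Icc 0 Q := uIcc_of_le hQle
  set f : ℝ → ℝ := fun t => ξ t ^ 2 with hfdef
  set f' : ℝ → ℝ := fun t => 2 * ξ t * ξ' t with hf'def
  set f'' : ℝ → ℝ := fun t => 2 * ξ t * ξ'' t + 2 * ξ' t ^ 2 with hf''def
  -- derivatives of f and f'
  have hfD : ∀ t ∈ Icc (0 : ℝ) Q, HasDerivAt f (f' t) t := by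
    intro t ht
    have h : HasDerivAt (fun y => ξ y ^ 2) (((2 : ℕ) : ℝ) * ξ t ^ (2 - 1) * ξ' t) t :=
      (hξ t ht).fun_pow 2
    convert h using 1
    simp only [hf'def]
    push_cast
    ring
  have hf'D : ∀ t ∈ Icc (0 : ℝ) Q, HasDerivAt f' (f'' t) t := by
    intro t ht
    have h : HasDerivAt (fun y => 2 * ξ y * ξ' y) (2 * ξ' t * ξ' t + 2 * ξ t * ξ'' t) t :=
      ((hξ t ht).const_mul 2).fun_mul (hξd t ht)
    convert h using 1
    simp [hf''def]; ring
  -- continuity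
  have hξc : ContinuousOn ξ (Icc 0 Q) := fun t ht => (hξ t ht).continuousAt.continuousWithinAt
  have hξ'c : ContinuousOn ξ' (Icc 0 Q) := fun t ht => (hξd t ht).continuousAt.continuousWithinAt
  have hGc : ContinuousOn G (Icc 0 Q) := fun t ht => (hG t ht).continuousAt.continuousWithinAt
  have hfc : ContinuousOn f (Icc 0 Q) := hξc.pow 2
  have hf'c : ContinuousOn f' (Icc 0 Q) := (continuousOn_const.mul hξc).mul hξ'c
  have hf''c : ContinuousOn f'' (Icc 0 Q) :=
    ((continuousOn_const.mul hξc).mul hξ''c).add (continuousOn_const.mul (hξ'c.pow 2))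
  -- monotonicity of the partition
  have hmono : ∀ m n : ℕ, m ≤ n → n ≤ N + 1 → p m ≤ p n := by
    intro m n hmn hn
    induction n with
    | zero => simp [Nat.le_zero.mp hmn]
    | succ k ih =>
      rcases Nat.eq_or_lt_of_le hmn with h | h
      · rw [h]
      · exact (ih (Nat.lt_succ_iff.mp h) (Nat.le_of_succ_le hn)).trans
          (hpmono k (Nat.succ_le_succ_iff.mp hn)).le
  have hpmem : ∀ n ≤ N + 1, p n ∈ Icc (0 : ℝ) Q := by
    intro n hn
    constructor
    · rw [← hp0]; exact hmono 0 n (Nat.zero_le _) hn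
    · rw [← hpN]; exact hmono n (N + 1) hn le_rfl
  have hsub : ∀ c d : ℝ, c ∈ Icc (0 : ℝ) Q → d ∈ Icc (0 : ℝ) Q → uIcc c d ⊆ Icc 0 Q := by
    intro c d hc hd
    rw [← hIcc]
    exact uIcc_subset_uIcc (by rwa [hIcc]) (by rwa [hIcc])
  -- truncated G, continuous on all of ℝ
  set Gt : ℝ → ℝ := fun t => G (max 0 (min t Q)) with hGtdef
  have hGtc : Continuous Gt := by
    apply hGc.comp_continuous (by fun_prop)
    intro x
    constructor
    · exact le_max_left _ _
    · exact max_le hQle (min_le_right _ _)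
  have hGt_eq : ∀ t ∈ Icc (0 : ℝ) Q, Gt t = G t := by
    intro t ht
    simp only [hGtdef, min_eq_left ht.2, max_eq_right ht.1]
  set Φ : ℝ → ℝ := fun t => ∫ s in (0 : ℝ)..t, Gt s with hΦdef
  have hΦD : ∀ t : ℝ, HasDerivAt Φ (Gt t) t := by
    intro t
    exact intervalIntegral.integral_hasDerivAt_right (hGtc.intervalIntegrable 0 t)
      (hGtc.stronglyMeasurable.stronglyMeasurableAtFilter) hGtc.continuousAt
  have hΦc : Continuous Φ := by
    have : Differentiable ℝ Φ := fun t => (hΦD t).differentiableAt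
    exact this.continuous
  have hΦ0 : Φ 0 = 0 := intervalIntegral.integral_same
  -- ∫ c..d G = Φ d - Φ c for c,d ∈ [0,Q]
  have hΦint : ∀ c d : ℝ, c ∈ Icc (0 : ℝ) Q → d ∈ Icc (0 : ℝ) Q →
      (∫ s in c..d, G s) = Φ d - Φ c := by
    intro c d hc hd
    have h1 : Φ d - Φ c = ∫ s in c..d, Gt s :=
      intervalIntegral.integral_interval_sub_left (hGtc.intervalIntegrable 0 d)
        (hGtc.intervalIntegrable 0 c)
    rw [h1]
    exact intervalIntegral.integral_congr (fun x hx => (hGt_eq x (hsub c d hc hd hx)).symm)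
  -- the comparison piecewise-linear data
  set a : ℕ → ℝ := fun n => ∑ k ∈ Finset.range n, 2 * π * χ k * (p (k + 1) - p k) with hadef
  have ha0 : a 0 = 0 := by simp [hadef]
  have haS : ∀ n, a (n + 1) = a n + 2 * π * χ n * (p (n + 1) - p n) := by
    intro n; simp [hadef, Finset.sum_range_succ]
  -- pointwise bound Φ + L ≤ a n + 2πχₙ(s - pₙ) on [pₙ, pₙ₊₁]
  have hPB : ∀ n ≤ N, ∀ s ∈ Icc (p n) (p (n + 1)), Φ s + L s ≤ a n + 2 * π * χ n * (s - p n) := by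
    intro n hn
    induction n with
    | zero =>
      intro s hs
      have hsmem : s ∈ Icc (0 : ℝ) Q := by
        constructor
        · rw [← hp0]; exact hs.1
        · exact hs.2.trans (hpmem 1 (by omega)).2
      have h := hFiala 0 (Nat.zero_le _) (p 0) s le_rfl hs.1 hs.2
      rw [hΦint (p 0) s (hpmem 0 (by omega)) hsmem] at h
      rw [hp0] at h ⊢
      rw [hΦ0] at h
      rw [ha0]
      linarith [hL0 ▸ h]
    | succ k ih =>
      intro s hs
      have hkN : k ≤ N := Nat.le_of_succ_le hn
      have hpk1 : p (k + 1) ∈ Icc (0 : ℝ) Q := hpmem (k + 1) (by omega)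
      have hsmem : s ∈ Icc (0 : ℝ) Q := by
        constructor
        · exact hpk1.1.trans hs.1
        · exact hs.2.trans (hpmem (k + 2) (by omega)).2
      have hbase : Φ (p (k + 1)) + L (p (k + 1)) ≤ a (k + 1) := by
        have := ih hkN (p (k + 1)) ⟨(hpmono k hkN).le, le_rfl⟩
        rw [haS k]; linarith
      have h := hFiala (k + 1) hn (p (k + 1)) s le_rfl hs.1 hs.2
      rw [hΦint (p (k + 1)) s hpk1 hsmem] at h
      linarith
  -- integrability helpers
  have hInt : ∀ (h : ℝ → ℝ), ContinuousOn h (Icc 0 Q) → ∀ c d : ℝ, c ∈ Icc (0 : ℝ) Q →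
      d ∈ Icc (0 : ℝ) Q → IntervalIntegrable h MeasureTheory.volume c d := by
    intro h hc c d hcm hdm
    exact (hc.mono (hsub c d hcm hdm)).intervalIntegrable
  have h0mem : (0 : ℝ) ∈ Icc (0 : ℝ) Q := ⟨le_rfl, hQle⟩
  have hQmem : Q ∈ Icc (0 : ℝ) Q := ⟨hQle, le_rfl⟩
  have hfQ : f Q = 0 := by simp [hfdef, hξQ]
  have hf'Q : f' Q = 0 := by simp [hf'def, hξQ]
  -- Step A: ∫ f G' = -∫ f' G
  have stepA : (∫ t in (0 : ℝ)..Q, f t * G' t) = -(∫ t in (0 : ℝ)..Q, f' t * G t) := by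
    have h := intervalIntegral.integral_mul_deriv_eq_deriv_mul
      (u := f) (v := G) (u' := f') (v' := G')
      (fun x hx => hfD x (hIcc ▸ hx)) (fun x hx => hG x (hIcc ▸ hx))
      (hInt f' hf'c 0 Q h0mem hQmem) (hInt G' hG'c 0 Q h0mem hQmem)
    rw [h, hfQ, hG0]; ring
  -- Step B: ∫ f' G = -∫ f'' Φ
  have stepB : (∫ t in (0 : ℝ)..Q, f' t * G t) = -(∫ t in (0 : ℝ)..Q, f'' t * Φ t) := by
    have hcongr : (∫ t in (0 : ℝ)..Q, f' t * G t) = ∫ t in (0 : ℝ)..Q, f' t * Gt t :=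
      intervalIntegral.integral_congr (fun x hx => by
        rw [hGt_eq x (hIcc ▸ hx)])
    have h := intervalIntegral.integral_mul_deriv_eq_deriv_mul
      (u := f') (v := Φ) (u' := f'') (v' := Gt)
      (fun x hx => hf'D x (hIcc ▸ hx)) (fun x _ => hΦD x)
      (hInt f'' hf''c 0 Q h0mem hQmem) (hGtc.intervalIntegrable 0 Q)
    rw [hcongr, h, hf'Q, hΦ0]; ring
  -- integrability of f''*(Φ+L) and of f''*L on [0,Q]
  have hΦLc : ContinuousOn (fun t => f'' t * (Φ t + L t)) (Icc 0 Q) :=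
    hf''c.mul (hΦc.continuousOn.add hLc)
  have hf''Lc : ContinuousOn (fun t => f'' t * L t) (Icc 0 Q) := hf''c.mul hLc
  have hf''Φc : ContinuousOn (fun t => f'' t * Φ t) (Icc 0 Q) := hf''c.mul hΦc.continuousOn
  -- key estimate: ∫₀^Q f''(Φ+L) ≤ 2π (f 0 - S)
  set S : ℝ := ∑ n ∈ Finset.Icc 1 N, ω n * ξ (p n) ^ 2 with hSdef
  have key : (∫ t in (0 : ℝ)..Q, f'' t * (Φ t + L t)) ≤ 2 * π * (f 0 - S) := by
    -- split into the subintervals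
    have hsplit : (∫ t in (0 : ℝ)..Q, f'' t * (Φ t + L t)) =
        ∑ n ∈ Finset.range (N + 1), ∫ t in (p n)..(p (n + 1)), f'' t * (Φ t + L t) := by
      rw [intervalIntegral.sum_integral_adjacent_intervals
        (fun k hk => hInt _ hΦLc (p k) (p (k + 1)) (hpmem k (by omega)) (hpmem (k+1) (by omega)))]
      rw [hp0, hpN]
    rw [hsplit]
    -- bound each term
    have hterm : ∀ n ∈ Finset.range (N + 1),
        (∫ t in (p n)..(p (n + 1)), f'' t * (Φ t + L t)) ≤
          f' (p (n + 1)) * a (n + 1) - f' (p n) * a n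
            - 2 * π * χ n * (f (p (n + 1)) - f (p n)) := by
      intro n hn
      rw [Finset.mem_range] at hn
      have hnN : n ≤ N := by omega
      have hpn : p n ∈ Icc (0 : ℝ) Q := hpmem n (by omega)
      have hpn1 : p (n + 1) ∈ Icc (0 : ℝ) Q := hpmem (n + 1) (by omega)
      set g : ℝ → ℝ := fun s => a n + 2 * π * χ n * (s - p n) with hgdef
      have hgD : ∀ s : ℝ, HasDerivAt g (2 * π * χ n) s := by
        intro s
        have h := (((hasDerivAt_id s).sub_const (p n)).const_mul (2 * π * χ n)).const_add (a n)
        simpa [hgdef] using h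
      have hgc : Continuous g := by fun_prop
      have hmon : (∫ t in (p n)..(p (n + 1)), f'' t * (Φ t + L t)) ≤
          ∫ t in (p n)..(p (n + 1)), f'' t * g t := by
        apply intervalIntegral.integral_mono_on (hpmono n hnN).le
          (hInt _ hΦLc _ _ hpn hpn1) ((hInt f'' hf''c _ _ hpn hpn1).mul_continuousOn
            hgc.continuousOn)
        intro x hx
        have hxm : x ∈ Icc (0 : ℝ) Q := ⟨hpn.1.trans hx.1, hx.2.trans hpn1.2⟩
        have hbd := hPB n hnN x hx
        have hnn : 0 ≤ f'' x := by
          obtain ⟨h1, h2, h3⟩ := hsign x hxm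
          have : 0 ≤ ξ' x ^ 2 := sq_nonneg _
          simp only [hf''def]
          nlinarith
        exact mul_le_mul_of_nonneg_left hbd hnn
      -- compute ∫ f'' g by parts
      have hIBP := intervalIntegral.integral_mul_deriv_eq_deriv_mul
        (u := g) (v := f') (u' := fun _ => 2 * π * χ n) (v' := f'')
        (fun x _ => hgD x)
        (fun x hx => hf'D x (hsub _ _ hpn hpn1 hx))
        (intervalIntegrable_const)
        (hInt f'' hf''c _ _ hpn hpn1)
      -- ∫ g * f'' = g b f' b - g a f' a - 2πχₙ ∫ f'
      have hftc : (∫ t in (p n)..(p (n + 1)), f' t) = f (p (n + 1)) - f (p n) :=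
        intervalIntegral.integral_eq_sub_of_hasDerivAt
          (fun x hx => hfD x (hsub _ _ hpn hpn1 hx))
          (hInt f' hf'c _ _ hpn hpn1)
      have hswap : (∫ t in (p n)..(p (n + 1)), f'' t * g t)
          = ∫ t in (p n)..(p (n + 1)), g t * f'' t :=
        intervalIntegral.integral_congr (fun x _ => mul_comm _ _)
      have hgb : g (p (n + 1)) = a (n + 1) := by rw [haS n]
      have hga : g (p n) = a n := by simp [hgdef]
      have hconst : (∫ _t in (p n)..(p (n + 1)), (2 * π * χ n) * f' _t)
          = 2 * π * χ n * (f (p (n + 1)) - f (p n)) := by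
        rw [← hftc, ← intervalIntegral.integral_const_mul]
      calc (∫ t in (p n)..(p (n + 1)), f'' t * (Φ t + L t))
          ≤ ∫ t in (p n)..(p (n + 1)), f'' t * g t := hmon
        _ = ∫ t in (p n)..(p (n + 1)), g t * f'' t := hswap
        _ = g (p (n + 1)) * f' (p (n + 1)) - g (p n) * f' (p n)
            - ∫ t in (p n)..(p (n + 1)), (2 * π * χ n) * f' t := hIBP
        _ = f' (p (n + 1)) * a (n + 1) - f' (p n) * a n
            - 2 * π * χ n * (f (p (n + 1)) - f (p n)) := by
            rw [hconst, hgb, hga]; ring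
    -- sum the bounds
    have hsum := Finset.sum_le_sum hterm
    refine hsum.trans (le_of_eq ?_)
    have h1 : ∑ n ∈ Finset.range (N + 1),
        (f' (p (n + 1)) * a (n + 1) - f' (p n) * a n) =
        f' (p (N + 1)) * a (N + 1) - f' (p 0) * a 0 :=
      Finset.sum_range_sub (fun n => f' (p n) * a n) (N + 1)
    -- Abel summation identity
    have hχsucc : ∀ m : ℕ, χ (m + 1) = χ m - ω (m + 1) := by
      intro m
      rw [hχ, hχ, Finset.sum_Icc_succ_top (Nat.one_le_iff_ne_zero.mpr (Nat.succ_ne_zero m))]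
      ring
    have hAbel : ∀ m : ℕ, ∑ n ∈ Finset.range m, χ n * (f (p (n + 1)) - f (p n)) =
        χ m * f (p m) - χ 0 * f (p 0) + ∑ n ∈ Finset.Icc 1 m, ω n * f (p n) := by
      intro m
      induction m with
      | zero => simp
      | succ k ih =>
        rw [Finset.sum_range_succ, ih,
          Finset.sum_Icc_succ_top (Nat.one_le_iff_ne_zero.mpr (Nat.succ_ne_zero k)),
          hχsucc k]
        ring
    have hχ0 : χ 0 = 1 := by rw [hχ]; simp
    have hS' : ∑ n ∈ Finset.Icc 1 (N + 1), ω n * f (p n) = S := by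
      rw [Finset.sum_Icc_succ_top (Nat.one_le_iff_ne_zero.mpr (Nat.succ_ne_zero N)),
        hpN, hfQ]
      simp [hSdef, hfdef]
    have h2 : ∑ n ∈ Finset.range (N + 1), 2 * π * χ n * (f (p (n + 1)) - f (p n)) =
        2 * π * (S - f 0) := by
      have : ∑ n ∈ Finset.range (N + 1), 2 * π * χ n * (f (p (n + 1)) - f (p n)) =
          2 * π * ∑ n ∈ Finset.range (N + 1), χ n * (f (p (n + 1)) - f (p n)) := by
        rw [Finset.mul_sum]
        exact Finset.sum_congr rfl (fun n _ => by ring)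
      rw [this, hAbel (N + 1), hpN, hfQ, hχ0, hS', hp0]
      ring
    have hsum_split : ∑ n ∈ Finset.range (N + 1),
        (f' (p (n + 1)) * a (n + 1) - f' (p n) * a n
          - 2 * π * χ n * (f (p (n + 1)) - f (p n))) =
        (∑ n ∈ Finset.range (N + 1), (f' (p (n + 1)) * a (n + 1) - f' (p n) * a n))
          - ∑ n ∈ Finset.range (N + 1), 2 * π * χ n * (f (p (n + 1)) - f (p n)) := by
      rw [← Finset.sum_sub_distrib]
    rw [hsum_split, h1, h2, hpN, hf'Q, ha0]
    ring
  -- conclude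
  have hIΦ := hInt _ hf''Φc 0 Q h0mem hQmem
  have hIL := hInt _ hf''Lc 0 Q h0mem hQmem
  have hadd : (∫ t in (0 : ℝ)..Q, f'' t * (Φ t + L t)) =
      (∫ t in (0 : ℝ)..Q, f'' t * Φ t) + ∫ t in (0 : ℝ)..Q, f'' t * L t := by
    rw [← intervalIntegral.integral_add hIΦ hIL]
    exact intervalIntegral.integral_congr (fun x _ => by ring)
  have hLHS : (∫ t in (0 : ℝ)..Q, ξ t ^ 2 * G' t) = ∫ t in (0 : ℝ)..Q, f'' t * Φ t := by
    have : (∫ t in (0 : ℝ)..Q, ξ t ^ 2 * G' t) = ∫ t in (0 : ℝ)..Q, f t * G' t := rfl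
    rw [this, stepA, stepB]; ring
  have hRHSint : (∫ t in (0 : ℝ)..Q, (2 * ξ t * ξ'' t + 2 * ξ' t ^ 2) * L t)
      = ∫ t in (0 : ℝ)..Q, f'' t * L t := rfl
  rw [hLHS, hRHSint]
  have hf0 : ξ 0 ^ 2 = f 0 := rfl
  rw [hf0]
  linarith [key, hadd]
end

section
/- Let α > 0, let a ∈ [1/2, 2], and let c ≥ (2 + a)α². Let L : [0, π/(2α)] → ℝ be a continuous function with L(t) ≥ (2π/α) sin(αt) for all t ∈ [0, π/(2α)]. Then ∫_0^{π/(2α)} ((1 − 2a)α² sin²(αt) + (2aα² − c) cos²(αt)) L(t) dt + 2πa ≤ 0. Moreover, equality holds if and only if c = (2 + a)α² and L(t) = (2π/α) sin(αt) for every t ∈ [0, π/(2α)]. -/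
open Real Set MeasureTheory

lemma key_integral (α A B : ℝ) (hα : 0 < α) :
    ∫ t in (0:ℝ)..(π / (2 * α)),
      (A * Real.sin (α * t) ^ 2 + B * Real.cos (α * t) ^ 2)
        * ((2 * π / α) * Real.sin (α * t))
      = (2 * π / (3 * α ^ 2)) * (2 * A + B) := by
  have hα' : α ≠ 0 := hα.ne'
  set F : ℝ → ℝ := fun x =>
    (-(2 * π * A / α ^ 2)) * Real.cos (α * x)
      + (-(2 * π * (B - A) / (3 * α ^ 2))) * Real.cos (α * x) ^ 3 with hF
  have hderiv : ∀ t ∈ uIcc (0:ℝ) (π / (2 * α)), HasDerivAt F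
      ((A * Real.sin (α * t) ^ 2 + B * Real.cos (α * t) ^ 2)
        * ((2 * π / α) * Real.sin (α * t))) t := by
    intro t _
    have h1 : HasDerivAt (fun x => Real.cos (α * x)) (-Real.sin (α * t) * α) t := by
      refine HasDerivAt.congr_deriv ((Real.hasDerivAt_cos (α * t)).comp t ((hasDerivAt_id t).const_mul α)) ?_
      simp
    have h3 : HasDerivAt (fun x => Real.cos (α * x) ^ 3)
        (3 * Real.cos (α * t) ^ 2 * (-Real.sin (α * t) * α)) t := by
      refine (h1.pow 3).congr_deriv ?_
      norm_num
    have := (h1.const_mul (-(2 * π * A / α ^ 2))).add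
      (h3.const_mul (-(2 * π * (B - A) / (3 * α ^ 2))))
    refine this.congr_deriv ?_
    rw [Real.sin_sq (α * t)]
    field_simp
    ring
  have hcont : ContinuousOn (fun t =>
      (A * Real.sin (α * t) ^ 2 + B * Real.cos (α * t) ^ 2)
        * ((2 * π / α) * Real.sin (α * t))) (uIcc (0:ℝ) (π / (2 * α))) := by
    fun_prop
  rw [intervalIntegral.integral_eq_sub_of_hasDerivAt hderiv hcont.intervalIntegrable]
  have hco : Real.cos (α * (π / (2 * α))) = 0 := by
    rw [show α * (π / (2 * α)) = π / 2 by field_simp]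
    exact Real.cos_pi_div_two
  simp only [hF, hco, mul_zero, Real.cos_zero]
  field_simp
  ring

lemma aux_neg (α a s k : ℝ) (hα : 0 < α) (ha : a ∈ Set.Icc (1 / 2 : ℝ) 2)
    (hs : 0 < s) (hk : 0 < k) :
    (1 - 2 * a) * α ^ 2 * s ^ 2 + (2 * a * α ^ 2 - (2 + a) * α ^ 2) * k ^ 2 < 0 := by
  have h1 : (0:ℝ) < α ^ 2 * s ^ 2 := by positivity
  have h2 : (0:ℝ) < α ^ 2 * k ^ 2 := by positivity
  rcases le_total (α ^ 2 * s ^ 2) (α ^ 2 * k ^ 2) with h | h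
  · nlinarith [mul_nonneg (show (0:ℝ) ≤ 2 - a by linarith [ha.2]) (sub_nonneg.2 h),
      mul_pos (show (0:ℝ) < a + 1 by linarith [ha.1]) h1]
  · nlinarith [mul_nonneg (show (0:ℝ) ≤ 2 * a - 1 by linarith [ha.1]) (sub_nonneg.2 h),
      mul_pos (show (0:ℝ) < a + 1 by linarith [ha.1]) h2]

set_option maxHeartbeats 1000000 in
/-- The comparison inequality (E-me)/(E-mf): for `α > 0`, `a ∈ [1/2, 2]`,
`c ≥ (2+a)α²`, and `L` continuous on `[0, π/(2α)]` with
`L(t) ≥ (2π/α)sin(αt)`, one has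
`∫_0^{π/(2α)} ((1-2a)α²sin²(αt) + (2aα²-c)cos²(αt)) L(t) dt + 2πa ≤ 0`,
with equality iff `c = (2+a)α²` and `L(t) = (2π/α)sin(αt)` on the interval. -/
theorem stmt_11 (α a c : ℝ) (hα : 0 < α) (ha : a ∈ Set.Icc (1 / 2 : ℝ) 2)
    (hc : (2 + a) * α ^ 2 ≤ c) (L : ℝ → ℝ)
    (hLc : ContinuousOn L (Icc 0 (π / (2 * α))))
    (hL : ∀ t ∈ Icc (0 : ℝ) (π / (2 * α)),
      (2 * π / α) * Real.sin (α * t) ≤ L t) :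
    (∫ t in (0 : ℝ)..(π / (2 * α)),
        ((1 - 2 * a) * α ^ 2 * Real.sin (α * t) ^ 2
          + (2 * a * α ^ 2 - c) * Real.cos (α * t) ^ 2) * L t)
      + 2 * π * a ≤ 0 ∧
    ((∫ t in (0 : ℝ)..(π / (2 * α)),
        ((1 - 2 * a) * α ^ 2 * Real.sin (α * t) ^ 2
          + (2 * a * α ^ 2 - c) * Real.cos (α * t) ^ 2) * L t)
      + 2 * π * a = 0 ↔
      c = (2 + a) * α ^ 2 ∧
        ∀ t ∈ Icc (0 : ℝ) (π / (2 * α)),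
          L t = (2 * π / α) * Real.sin (α * t)) := by
  have hα' : α ≠ 0 := hα.ne'
  set T : ℝ := π / (2 * α) with hTdef
  have hT : 0 < T := by rw [hTdef]; positivity
  clear_value T
  have huIcc : uIcc (0:ℝ) T = Icc 0 T := uIcc_of_le hT.le
  -- f ≤ 0 pointwise
  have hfnp : ∀ t : ℝ, (1 - 2 * a) * α ^ 2 * Real.sin (α * t) ^ 2
      + (2 * a * α ^ 2 - c) * Real.cos (α * t) ^ 2 ≤ 0 := by
    intro t
    have h1 : (0:ℝ) ≤ α ^ 2 * Real.sin (α * t) ^ 2 := by positivity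
    have h2 : (0:ℝ) ≤ Real.cos (α * t) ^ 2 := by positivity
    have e1 := mul_nonneg (show (0:ℝ) ≤ 2 * a - 1 by linarith [ha.1]) h1
    have e2 := mul_nonneg (show (0:ℝ) ≤ c - 2 * a * α ^ 2 by
      nlinarith [sq_nonneg α, ha.2]) h2
    nlinarith
  -- integrability
  have hILf : IntervalIntegrable (fun t =>
      ((1 - 2 * a) * α ^ 2 * Real.sin (α * t) ^ 2
        + (2 * a * α ^ 2 - c) * Real.cos (α * t) ^ 2) * L t) volume 0 T := by
    apply ContinuousOn.intervalIntegrable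
    rw [huIcc]
    exact (Continuous.continuousOn (by fun_prop)).mul hLc
  have hIgf : IntervalIntegrable (fun t =>
      ((1 - 2 * a) * α ^ 2 * Real.sin (α * t) ^ 2
        + (2 * a * α ^ 2 - c) * Real.cos (α * t) ^ 2)
          * ((2 * π / α) * Real.sin (α * t))) volume 0 T := by
    apply ContinuousOn.intervalIntegrable
    exact Continuous.continuousOn (by fun_prop)
  -- pointwise comparison
  have hmono : ∀ t ∈ Icc (0:ℝ) T,
      ((1 - 2 * a) * α ^ 2 * Real.sin (α * t) ^ 2
        + (2 * a * α ^ 2 - c) * Real.cos (α * t) ^ 2) * L t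
      ≤ ((1 - 2 * a) * α ^ 2 * Real.sin (α * t) ^ 2
        + (2 * a * α ^ 2 - c) * Real.cos (α * t) ^ 2)
          * ((2 * π / α) * Real.sin (α * t)) :=
    fun t ht => mul_le_mul_of_nonpos_left (hL t ht) (hfnp t)
  have hIJ := intervalIntegral.integral_mono_on hT.le hILf hIgf hmono
  -- value of the comparison integral
  have hJ : (∫ t in (0:ℝ)..T,
      ((1 - 2 * a) * α ^ 2 * Real.sin (α * t) ^ 2
        + (2 * a * α ^ 2 - c) * Real.cos (α * t) ^ 2)
          * ((2 * π / α) * Real.sin (α * t)))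
      = (2 * π / (3 * α ^ 2)) * (2 * ((1 - 2 * a) * α ^ 2) + (2 * a * α ^ 2 - c)) := by
    rw [hTdef]; exact key_integral α _ _ hα
  have hJval : (∫ t in (0:ℝ)..T,
      ((1 - 2 * a) * α ^ 2 * Real.sin (α * t) ^ 2
        + (2 * a * α ^ 2 - c) * Real.cos (α * t) ^ 2)
          * ((2 * π / α) * Real.sin (α * t))) + 2 * π * a
      = (2 * π / (3 * α ^ 2)) * ((2 + a) * α ^ 2 - c) := by
    rw [hJ]; field_simp; ring
  have hpos : (0:ℝ) < 2 * π / (3 * α ^ 2) := by positivity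
  have hJ0 : (∫ t in (0:ℝ)..T,
      ((1 - 2 * a) * α ^ 2 * Real.sin (α * t) ^ 2
        + (2 * a * α ^ 2 - c) * Real.cos (α * t) ^ 2)
          * ((2 * π / α) * Real.sin (α * t))) + 2 * π * a ≤ 0 := by
    rw [hJval]
    exact mul_nonpos_of_nonneg_of_nonpos hpos.le (by linarith)
  constructor
  · linarith
  constructor
  · -- forward: equality implies rigidity
    intro heq
    have hceq : c = (2 + a) * α ^ 2 := by
      have h1 : (2 * π / (3 * α ^ 2)) * ((2 + a) * α ^ 2 - c) = 0 := by linarith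
      rcases mul_eq_zero.mp h1 with h | h
      · exact absurd h hpos.ne'
      · linarith
    refine ⟨hceq, ?_⟩
    intro t₀ ht₀
    by_contra hne
    have hlt0 : (2 * π / α) * Real.sin (α * t₀) < L t₀ :=
      (hL t₀ ht₀).lt_of_ne (fun h => hne h.symm)
    -- find an interior point where L > ℓ
    have hcontd : ContinuousWithinAt (fun t => L t - (2 * π / α) * Real.sin (α * t))
        (Icc 0 T) t₀ := (hLc t₀ ht₀).sub (Continuous.continuousWithinAt (by fun_prop))
    have hev : ∀ᶠ t in nhdsWithin t₀ (Icc 0 T),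
        0 < L t - (2 * π / α) * Real.sin (α * t) :=
      hcontd (Ioi_mem_nhds (sub_pos.2 hlt0))
    have hev2 : ∀ᶠ t in nhdsWithin t₀ (Ioo 0 T),
        0 < L t - (2 * π / α) * Real.sin (α * t) :=
      hev.filter_mono (nhdsWithin_mono _ Ioo_subset_Icc_self)
    have hnb : (nhdsWithin t₀ (Ioo 0 T)).NeBot := by
      rw [← mem_closure_iff_nhdsWithin_neBot, closure_Ioo hT.ne]
      exact ht₀
    obtain ⟨t₁, hdt₁, ht₁⟩ := (hev2.and eventually_mem_nhdsWithin).exists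
    -- f t₁ < 0
    have hαt₁ : α * t₁ < π / 2 := by
      have : α * t₁ < α * T := by
        exact mul_lt_mul_of_pos_left ht₁.2 hα
      rw [hTdef] at this
      calc α * t₁ < α * (π / (2 * α)) := this
        _ = π / 2 := by field_simp
    have hs : 0 < Real.sin (α * t₁) :=
      Real.sin_pos_of_pos_of_lt_pi (mul_pos hα ht₁.1) (by linarith [pi_pos])
    have hcos : 0 < Real.cos (α * t₁) :=
      Real.cos_pos_of_mem_Ioo ⟨by nlinarith [pi_pos, mul_pos hα ht₁.1], hαt₁⟩
    have hfneg : (1 - 2 * a) * α ^ 2 * Real.sin (α * t₁) ^ 2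
        + (2 * a * α ^ 2 - c) * Real.cos (α * t₁) ^ 2 < 0 := by
      rw [hceq]
      exact aux_neg α a _ _ hα ha hs hcos
    -- strict inequality of integrals: contradiction
    have hcont1 : ContinuousOn (fun t =>
        ((1 - 2 * a) * α ^ 2 * Real.sin (α * t) ^ 2
          + (2 * a * α ^ 2 - c) * Real.cos (α * t) ^ 2) * L t) (Icc 0 T) :=
      (Continuous.continuousOn (by fun_prop)).mul hLc
    have hcont2 : ContinuousOn (fun t =>
        ((1 - 2 * a) * α ^ 2 * Real.sin (α * t) ^ 2
          + (2 * a * α ^ 2 - c) * Real.cos (α * t) ^ 2)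
            * ((2 * π / α) * Real.sin (α * t))) (Icc 0 T) :=
      Continuous.continuousOn (by fun_prop)
    have hle' : ∀ x ∈ Ioc (0:ℝ) T,
        ((1 - 2 * a) * α ^ 2 * Real.sin (α * x) ^ 2
          + (2 * a * α ^ 2 - c) * Real.cos (α * x) ^ 2) * L x ≤
        ((1 - 2 * a) * α ^ 2 * Real.sin (α * x) ^ 2
          + (2 * a * α ^ 2 - c) * Real.cos (α * x) ^ 2)
            * ((2 * π / α) * Real.sin (α * x)) :=
      fun x hx => hmono x ⟨hx.1.le, hx.2⟩
    have hlt' : ((1 - 2 * a) * α ^ 2 * Real.sin (α * t₁) ^ 2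
          + (2 * a * α ^ 2 - c) * Real.cos (α * t₁) ^ 2) * L t₁ <
        ((1 - 2 * a) * α ^ 2 * Real.sin (α * t₁) ^ 2
          + (2 * a * α ^ 2 - c) * Real.cos (α * t₁) ^ 2)
            * ((2 * π / α) * Real.sin (α * t₁)) :=
      mul_lt_mul_of_neg_left (by linarith [hdt₁]) hfneg
    have hstrict := intervalIntegral.integral_lt_integral_of_continuousOn_of_le_of_exists_lt
      hT hcont1 hcont2 hle' ⟨t₁, ⟨ht₁.1.le, ht₁.2.le⟩, hlt'⟩
    linarith
  · -- backward: rigidity implies equality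
    rintro ⟨hceq, hLeq⟩
    have hIeq : (∫ t in (0:ℝ)..T,
        ((1 - 2 * a) * α ^ 2 * Real.sin (α * t) ^ 2
          + (2 * a * α ^ 2 - c) * Real.cos (α * t) ^ 2) * L t)
        = ∫ t in (0:ℝ)..T,
        ((1 - 2 * a) * α ^ 2 * Real.sin (α * t) ^ 2
          + (2 * a * α ^ 2 - c) * Real.cos (α * t) ^ 2)
            * ((2 * π / α) * Real.sin (α * t)) := by
      apply intervalIntegral.integral_congr
      intro t ht
      rw [huIcc] at ht
      simp only [hLeq t ht]
    rw [hIeq, hJval, hceq]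
    ring
end
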